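/- arXiv:2007.09725 — 10 statements merged into one kernel-verified Lean document; each statement's English description precedes it below -/
import Mathlib

section
/- Let 𝖯 be a Γ-Whitehead partition based at a vertex m. Then m ∈ Sing(𝖯), and every v ∈ max(𝖯) satisfies lk(v) = lk(m); in particular, all elements of max(𝖯) have the same link, i.e. they lie in a single ≤_f-equivalence class. -/
variable {V : Type*}

/-- The star of a vertex: the vertex together with its neighbors. -/
def gstar (Γ : SimpleGraph V) (v : V) : Set V :=
  insert v (Γ.neighborSet v)

/-- A Γ-Whitehead partition based at the vertex `m`: a partition of
`V± = V × Bool` (where `(v, true)` is `v⁺` and `(v, false)` is `v⁻`) into the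
two sides `plus`, `minus` and the part `lk(m)± = {x | x.1 ∈ lk(m)}`, such that
each side has at least two elements, `m⁺ ∈ plus`, `m⁻ ∈ minus`, and any two
distinct vertices in the same connected component of the subgraph of `Γ`
induced on `V ∖ st(m)` have all four of their elements in the same side. -/
structure GWPartition [Fintype V] (Γ : SimpleGraph V) (m : V) where
  plus : Set (V × Bool)
  minus : Set (V × Bool)
  disjoint_sides : Disjoint plus minus
  union_sides : plus ∪ minus = {x : V × Bool | x.1 ∉ Γ.neighborSet m}
  thick_plus : 2 ≤ plus.ncard
  thick_minus : 2 ≤ minus.ncard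
  base_plus : (m, true) ∈ plus
  base_minus : (m, false) ∈ minus
  component_const :
    ∀ a b : ({x : V | x ∉ gstar Γ m} : Set V), (a : V) ≠ (b : V) →
      (Γ.induce {x : V | x ∉ gstar Γ m}).Reachable a b →
      (({((a : V), true), ((a : V), false), ((b : V), true), ((b : V), false)} :
          Set (V × Bool)) ⊆ plus ∨
        ({((a : V), true), ((a : V), false), ((b : V), true), ((b : V), false)} :
          Set (V × Bool)) ⊆ minus)

variable [Fintype V] {Γ : SimpleGraph V} {m : V}

/-- `P` splits the vertex `v` if `v⁺` and `v⁻` lie in different sides of `P`. -/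
def GWPartition.Splits (P : GWPartition Γ m) (v : V) : Prop :=
  ((v, true) ∈ P.plus ∧ (v, false) ∈ P.minus) ∨
    ((v, true) ∈ P.minus ∧ (v, false) ∈ P.plus)

/-- The set `Sing(P)` of vertices split by `P`. -/
def GWPartition.sing (P : GWPartition Γ m) : Set V := {v | P.Splits v}

/-- `max(P)`: the set of vertices split by `P` that are maximal in `Sing(P)`
with respect to the relation `v ≤ u ↔ lk(v) ⊆ st(u)`. -/
def GWPartition.maxSet (P : GWPartition Γ m) : Set V :=
  {v | P.Splits v ∧ ∀ u, P.Splits u →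
    Γ.neighborSet v ⊆ gstar Γ u → Γ.neighborSet u ⊆ gstar Γ v}

/-- For a Γ-Whitehead partition `P` based at `m`: the base `m` lies in
`Sing(P)`, and every element of `max(P)` has the same link as `m`; in
particular all elements of `max(P)` lie in a single `≤_f`-equivalence class. -/
theorem stmt_5 (P : GWPartition Γ m) :
    m ∈ P.sing ∧ ∀ v ∈ P.maxSet, Γ.neighborSet v = Γ.neighborSet m := by
  have hm : P.Splits m := Or.inl ⟨P.base_plus, P.base_minus⟩
  refine ⟨hm, ?_⟩
  rintro v ⟨hv, hmax⟩
  by_cases hvm : v = m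
  · subst hvm; rfl
  have hvp : (v, true) ∈ P.plus ∪ P.minus := by
    rcases hv with ⟨h1, _⟩ | ⟨h1, _⟩
    · exact Or.inl h1
    · exact Or.inr h1
  have hvnl : v ∉ Γ.neighborSet m := by
    have := P.union_sides ▸ hvp
    exact this
  have hvS : v ∈ {x : V | x ∉ gstar Γ m} := by
    simp only [Set.mem_setOf_eq, gstar, Set.mem_insert_iff, not_or]
    exact ⟨hvm, hvnl⟩
  have hsub : Γ.neighborSet v ⊆ Γ.neighborSet m := by
    intro w hw
    by_contra hwm
    have hadj : Γ.Adj v w := hw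
    have hwne : (w : V) ≠ m := by
      rintro rfl
      exact hvnl hadj.symm
    have hwS : w ∈ {x : V | x ∉ gstar Γ m} := by
      simp only [Set.mem_setOf_eq, gstar, Set.mem_insert_iff, not_or]
      exact ⟨hwne, hwm⟩
    have hne : v ≠ w := hadj.ne
    have hiadj : (Γ.induce {x : V | x ∉ gstar Γ m}).Adj ⟨v, hvS⟩ ⟨w, hwS⟩ := by
      simpa using hadj
    rcases P.component_const ⟨v, hvS⟩ ⟨w, hwS⟩ hne hiadj.reachable with h | h
    · have h1 : (v, true) ∈ P.plus := h (by simp)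
      have h2 : (v, false) ∈ P.plus := h (by simp)
      rcases hv with ⟨_, hx⟩ | ⟨hx, _⟩
      · exact Set.disjoint_left.mp P.disjoint_sides h2 hx
      · exact Set.disjoint_left.mp P.disjoint_sides h1 hx
    · have h1 : (v, true) ∈ P.minus := h (by simp)
      have h2 : (v, false) ∈ P.minus := h (by simp)
      rcases hv with ⟨hx, _⟩ | ⟨_, hx⟩
      · exact Set.disjoint_left.mp P.disjoint_sides hx h1
      · exact Set.disjoint_left.mp P.disjoint_sides hx h2
  have hback : Γ.neighborSet m ⊆ gstar Γ v :=
    hmax m hm (fun w hw => Set.mem_insert_iff.mpr (Or.inr (hsub hw)))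
  apply Set.Subset.antisymm hsub
  intro w hw
  rcases Set.mem_insert_iff.mp (hback hw) with rfl | h
  · exact absurd hw hvnl
  · exact h
end

section
/- Let 𝖯 be a Γ-Whitehead partition based at a vertex m, and suppose 𝖯 splits a twist-dominant vertex v, i.e. a vertex v for which there exists u ≠ v with st(u) ⊆ st(v). Then max(𝖯) = {v}. -/
variable {V : Type*}

variable [Fintype V] {Γ : SimpleGraph V} {m : V}

/-- A split vertex is not adjacent to the base vertex `m`. -/
lemma GWPartition.splits_not_adj (P : GWPartition Γ m) {w : V} (hw : P.Splits w) :
    ¬ Γ.Adj m w := by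
  intro hadj
  have hmem : (w, true) ∈ P.plus ∪ P.minus := by
    rcases hw with ⟨h1, _⟩ | ⟨h1, _⟩
    · exact Or.inl h1
    · exact Or.inr h1
  rw [P.union_sides] at hmem
  exact hmem hadj

/-- A split vertex is split, so it can't be in both sides. -/
lemma GWPartition.splits_notMem_gstar (P : GWPartition Γ m) {w : V} (hw : P.Splits w)
    (hwm : w ≠ m) : w ∉ gstar Γ m := by
  intro h
  rcases h with h | h
  · exact hwm h
  · exact P.splits_not_adj hw h

/-- A split vertex other than `m` has its link inside `st(m)`. -/
lemma GWPartition.splits_lk_subset (P : GWPartition Γ m) {w : V} (hw : P.Splits w)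
    (hwm : w ≠ m) : Γ.neighborSet w ⊆ gstar Γ m := by
  intro x hx
  by_contra hxs
  have hwS : w ∉ gstar Γ m := P.splits_notMem_gstar hw hwm
  have hadj : Γ.Adj w x := hx
  have hxw : (w : V) ≠ x := hadj.ne
  have hreach : (Γ.induce {y : V | y ∉ gstar Γ m}).Reachable ⟨w, hwS⟩ ⟨x, hxs⟩ := by
    exact SimpleGraph.Adj.reachable (by simpa using hadj)
  have := P.component_const ⟨w, hwS⟩ ⟨x, hxs⟩ hxw hreach
  rcases this with h | h
  · have h1 : (w, true) ∈ P.plus := h (by simp)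
    have h2 : (w, false) ∈ P.plus := h (by simp)
    rcases hw with ⟨_, hf⟩ | ⟨ht, _⟩
    · exact P.disjoint_sides.ne_of_mem h2 hf rfl
    · exact P.disjoint_sides.ne_of_mem h1 ht rfl
  · have h1 : (w, true) ∈ P.minus := h (by simp)
    have h2 : (w, false) ∈ P.minus := h (by simp)
    rcases hw with ⟨ht, _⟩ | ⟨_, hf⟩
    · exact P.disjoint_sides.ne_of_mem ht h1 rfl
    · exact P.disjoint_sides.ne_of_mem hf h2 rfl

/-- If a Γ-Whitehead partition `P` splits a twist-dominant vertex `v` (one for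
which some `u ≠ v` satisfies `st(u) ⊆ st(v)`), then `max(P) = {v}`. -/
theorem stmt_6 (P : GWPartition Γ m) (v : V) (hv : P.Splits v)
    (htd : ∃ u, u ≠ v ∧ gstar Γ u ⊆ gstar Γ v) :
    P.maxSet = {v} := by
  obtain ⟨u, huv, hst⟩ := htd
  -- Step 1: v = m.
  have hvm : v = m := by
    by_contra hvm
    have hlk : Γ.neighborSet v ⊆ gstar Γ m := P.splits_lk_subset hv hvm
    -- u ∈ lk(v)
    have hu : u ∈ gstar Γ v := hst (Set.mem_insert u _)
    have huadj : Γ.Adj v u := by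
      rcases hu with h | h
      · exact absurd h huv
      · exact h
    have hum : u ∈ gstar Γ m := hlk huadj
    -- m ∈ st(u) ⊆ st(v)
    have hmu : m ∈ gstar Γ u := by
      rcases hum with h | h
      · exact h ▸ Set.mem_insert u _
      · exact Set.mem_insert_of_mem _ h.symm
    have hmv : m ∈ gstar Γ v := hst hmu
    rcases hmv with h | h
    · exact hvm h.symm
    · exact P.splits_not_adj hv h.symm
  subst hvm
  have hmsplit : P.Splits v := Or.inl ⟨P.base_plus, P.base_minus⟩
  ext w
  simp only [GWPartition.maxSet, Set.mem_setOf_eq, Set.mem_singleton_iff]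
  constructor
  · rintro ⟨hw, hmax⟩
    by_contra hwm
    -- lk(w) ⊆ st(m), so maximality gives lk(m) ⊆ st(w)
    have hlkw : Γ.neighborSet w ⊆ gstar Γ v := P.splits_lk_subset hw hwm
    have hlkm : Γ.neighborSet v ⊆ gstar Γ w := hmax v hmsplit hlkw
    -- u ∈ lk(m)
    have hu : u ∈ gstar Γ v := hst (Set.mem_insert u _)
    have huadj : Γ.Adj v u := by
      rcases hu with h | h
      · exact absurd h huv
      · exact h
    have huw : u ∈ gstar Γ w := hlkm huadj
    have huw' : u ≠ w := by
      rintro rfl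
      exact P.splits_not_adj hw huadj
    have hwadj : Γ.Adj w u := by
      rcases huw with h | h
      · exact absurd h huw'
      · exact h
    -- w ∈ st(u) ⊆ st(m), contradiction
    have hwm' : w ∈ gstar Γ v := hst (Set.mem_insert_of_mem _ hwadj.symm)
    rcases hwm' with h | h
    · exact hwm h
    · exact P.splits_not_adj hw h
  · rintro rfl
    refine ⟨hmsplit, fun z hz _ => ?_⟩
    rcases eq_or_ne z w with rfl | hzm
    · exact fun x hx => Set.mem_insert_of_mem _ hx
    · exact P.splits_lk_subset hz hzm
end

section
/- Let 𝖯 (based at m) and 𝖰 (based at m′) be compatible Γ-Whitehead partitions that both split a vertex v, and let P and Q denote the sides of 𝖯 and 𝖰 containing v⁺. If 𝖯 and 𝖰 do not commute, then P ⊆ Q or Q ⊆ P. If 𝖯 and 𝖰 commute, then neither P ⊆ Q nor Q ⊆ P. -/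
variable {V : Type*}

variable [Fintype V] {Γ : SimpleGraph V} {m : V}

/-- Two Γ-Whitehead partitions based at `m` and `m'` commute if `m ≠ m'` and
`m` is adjacent to `m'`. -/
def GWCommutes (Γ : SimpleGraph V) (m m' : V) : Prop := m ≠ m' ∧ Γ.Adj m m'

/-- `S` is a side of the Γ-Whitehead partition `P`. -/
def GWPartition.IsSide (P : GWPartition Γ m) (S : Set (V × Bool)) : Prop :=
  S = P.plus ∨ S = P.minus

/-- Two Γ-Whitehead partitions are compatible if they commute or they have
disjoint sides. -/
def GWCompatible {m m' : V} (P : GWPartition Γ m) (Q : GWPartition Γ m') : Prop :=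
  GWCommutes Γ m m' ∨ ∃ S T, P.IsSide S ∧ Q.IsSide T ∧ S ∩ T = ∅

/-- Any side of `P` consists of elements whose vertex is not adjacent to `m`. -/
lemma GWPartition.side_subset (P : GWPartition Γ m) {S : Set (V × Bool)}
    (hS : P.IsSide S) : S ⊆ {x : V × Bool | x.1 ∉ Γ.neighborSet m} := by
  rw [← P.union_sides]
  rcases hS with rfl | rfl
  · exact Set.subset_union_left
  · exact Set.subset_union_right

/-- If `m` and `m'` are distinct and non-adjacent, and a side of `P` contains an
element over a vertex adjacent to `m'`, then that side contains `m'⁺` and `m'⁻`. -/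
lemma GWPartition.base_mem_of_adj {m₁ m₂ : V} (hne : m₁ ≠ m₂) (hadj : ¬ Γ.Adj m₁ m₂)
    (P : GWPartition Γ m₁) {S : Set (V × Bool)} (hS : P.IsSide S)
    {u : V} {b : Bool} (hx : (u, b) ∈ S) (hu : Γ.Adj m₂ u) :
    (m₂, true) ∈ S ∧ (m₂, false) ∈ S := by
  have hum : ¬ Γ.Adj m₁ u := P.side_subset hS hx
  have hu_ne_m : u ≠ m₁ := by rintro rfl; exact hadj hu.symm
  have hu_mem : u ∈ {x : V | x ∉ gstar Γ m₁} := by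
    simp only [Set.mem_setOf_eq, gstar, Set.mem_insert_iff, SimpleGraph.mem_neighborSet]
    push_neg; exact ⟨hu_ne_m, hum⟩
  have hm'_mem : m₂ ∈ {x : V | x ∉ gstar Γ m₁} := by
    simp only [Set.mem_setOf_eq, gstar, Set.mem_insert_iff, SimpleGraph.mem_neighborSet]
    push_neg; exact ⟨hne.symm, hadj⟩
  have hune : u ≠ m₂ := hu.ne'
  have hreach : (Γ.induce {x : V | x ∉ gstar Γ m₁}).Reachable ⟨u, hu_mem⟩ ⟨m₂, hm'_mem⟩ :=
    SimpleGraph.Adj.reachable (show Γ.Adj u m₂ from hu.symm)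
  have hcc := P.component_const ⟨u, hu_mem⟩ ⟨m₂, hm'_mem⟩ hune hreach
  have hub : (u, b) ∈ ({(u, true), (u, false), (m₂, true), (m₂, false)} : Set (V × Bool)) := by
    cases b <;> simp
  rcases hcc with hsub | hsub
  · rcases hS with rfl | rfl
    · exact ⟨hsub (by simp), hsub (by simp)⟩
    · exact absurd hx (Set.disjoint_left.mp P.disjoint_sides (hsub hub))
  · rcases hS with rfl | rfl
    · exact absurd hx (Set.disjoint_right.mp P.disjoint_sides (hsub hub))
    · exact ⟨hsub (by simp), hsub (by simp)⟩

/-- If `P` and `Q` do not commute and have disjoint sides `S`, `T`, then every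
element of `S` lies in a side of `Q` and not in `T`. -/
lemma GWPartition.mem_union_of_disjoint_sides {m₁ m₂ : V}
    (P : GWPartition Γ m₁) (Q : GWPartition Γ m₂) (hnc : ¬ GWCommutes Γ m₁ m₂)
    {S T : Set (V × Bool)} (hS : P.IsSide S) (hT : Q.IsSide T) (hST : S ∩ T = ∅) :
    ∀ x ∈ S, (x ∈ Q.plus ∪ Q.minus) ∧ x ∉ T := by
  intro x hx
  have hempty : ∀ y, y ∉ S ∩ T := by rw [hST]; exact fun y => Set.notMem_empty y
  refine ⟨?_, fun hxT => hempty x ⟨hx, hxT⟩⟩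
  rw [Q.union_sides]
  by_cases hmm : m₁ = m₂
  · subst hmm; exact P.side_subset hS hx
  · have hadj : ¬ Γ.Adj m₁ m₂ := fun h => hnc ⟨hmm, h⟩
    obtain ⟨u, b⟩ := x
    intro hmem
    have hadj' : Γ.Adj m₂ u := hmem
    obtain ⟨h1, h2⟩ := GWPartition.base_mem_of_adj hmm hadj P hS hx hadj'
    rcases hT with rfl | rfl
    · exact hempty (m₂, true) ⟨h1, Q.base_plus⟩
    · exact hempty (m₂, false) ⟨h2, Q.base_minus⟩

/-- Given a side `S` of `P` and the side `Pside` containing `v⁺` for a split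
vertex `v`: either `S = Pside`, or `S` contains `v⁻` but not `v⁺`. -/
lemma GWPartition.side_trichotomy (P : GWPartition Γ m) {S Pside : Set (V × Bool)}
    (hS : P.IsSide S) (hPside : P.IsSide Pside) {v : V} (hsp : P.Splits v)
    (hv : (v, true) ∈ Pside) :
    S = Pside ∨ ((v, false) ∈ S ∧ (v, true) ∉ S) := by
  rcases hS with rfl | rfl <;> rcases hPside with rfl | rfl
  · exact Or.inl rfl
  · right
    rcases hsp with ⟨h1, h2⟩ | ⟨h1, h2⟩
    · exact absurd hv (Set.disjoint_left.mp P.disjoint_sides h1)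
    · exact ⟨h2, fun h => Set.disjoint_left.mp P.disjoint_sides h h1⟩
  · right
    rcases hsp with ⟨h1, h2⟩ | ⟨h1, h2⟩
    · exact ⟨h2, fun h => Set.disjoint_left.mp P.disjoint_sides h1 h⟩
    · exact absurd h1 (Set.disjoint_left.mp P.disjoint_sides hv)
  · exact Or.inl rfl

/-- Let `P` (based at `m`) and `Q` (based at `m'`) be compatible Γ-Whitehead
partitions both splitting the vertex `v`, and let `Pside`, `Qside` be the sides
of `P` and `Q` containing `v⁺`.  If `P` and `Q` do not commute then
`Pside ⊆ Qside` or `Qside ⊆ Pside`; if they commute then neither containment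
holds. -/
theorem stmt_7 {m' : V} (P : GWPartition Γ m) (Q : GWPartition Γ m')
    (hcompat : GWCompatible P Q) (v : V) (hPv : P.Splits v) (hQv : Q.Splits v)
    (Pside Qside : Set (V × Bool))
    (hPside : P.IsSide Pside) (hvP : (v, true) ∈ Pside)
    (hQside : Q.IsSide Qside) (hvQ : (v, true) ∈ Qside) :
    (¬ GWCommutes Γ m m' → Pside ⊆ Qside ∨ Qside ⊆ Pside) ∧
    (GWCommutes Γ m m' → ¬ Pside ⊆ Qside ∧ ¬ Qside ⊆ Pside) := by
  constructor
  · intro hnc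
    rcases hcompat with hc | ⟨S, T, hS, hT, hST⟩
    · exact absurd hc hnc
    have hST' : T ∩ S = ∅ := by rw [Set.inter_comm]; exact hST
    have hnc' : ¬ GWCommutes Γ m' m := fun ⟨hne, hadj⟩ => hnc ⟨hne.symm, hadj.symm⟩
    have hempty : ∀ y, y ∉ S ∩ T := by rw [hST]; exact fun y => Set.notMem_empty y
    rcases P.side_trichotomy hS hPside hPv hvP with rfl | ⟨hfS, htS⟩
    · -- S = Pside
      rcases Q.side_trichotomy hT hQside hQv hvQ with rfl | ⟨hfT, htT⟩
      · exact absurd ⟨hvP, hvQ⟩ (hempty (v, true))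
      · left
        intro x hx
        obtain ⟨hmem, hnT⟩ := P.mem_union_of_disjoint_sides Q hnc hS hT hST x hx
        rcases hT with rfl | rfl <;> rcases hQside with rfl | rfl
        · exact absurd hvQ htT
        · rcases hmem with h | h
          · exact absurd h hnT
          · exact h
        · rcases hmem with h | h
          · exact h
          · exact absurd h hnT
        · exact absurd hvQ htT
    · rcases Q.side_trichotomy hT hQside hQv hvQ with rfl | ⟨hfT, htT⟩
      · right
        intro x hx
        obtain ⟨hmem, hnS⟩ := Q.mem_union_of_disjoint_sides P hnc' hT hS hST' x hx
        rcases hS with rfl | rfl <;> rcases hPside with rfl | rfl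
        · exact absurd hvP htS
        · rcases hmem with h | h
          · exact absurd h hnS
          · exact h
        · rcases hmem with h | h
          · exact h
          · exact absurd h hnS
        · exact absurd hvP htS
      · exact absurd ⟨hfS, hfT⟩ (hempty (v, false))
  · rintro ⟨hne, hadj⟩
    have hmQ : ∀ b, (m, b) ∉ Qside := fun b h => Q.side_subset hQside h hadj.symm
    have hm'P : ∀ b, (m', b) ∉ Pside := fun b h => P.side_subset hPside h hadj
    constructor
    · intro hsub
      rcases hPside with rfl | rfl
      · exact hmQ true (hsub P.base_plus)
      · exact hmQ false (hsub P.base_minus)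
    · intro hsub
      rcases hQside with rfl | rfl
      · exact hm'P true (hsub Q.base_plus)
      · exact hm'P false (hsub Q.base_minus)
end

section
/- Let 𝖯 (based at m) and 𝖰 (based at m′) be Γ-Whitehead partitions that do not commute, and suppose P^× is a side of 𝖯 and Q^× is a side of 𝖰 with P^× ∩ Q^× = ∅. Then P^× ∩ lk(𝖰) = ∅, and hence P^× is contained in the other side of 𝖰; similarly Q^× ∩ lk(𝖯) = ∅ and Q^× is contained in the other side of 𝖯. -/
variable {V : Type*}

variable [Fintype V] {Γ : SimpleGraph V} {m : V}

lemma gw_key {m m' : V} (P : GWPartition Γ m) (Q : GWPartition Γ m')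
    (hncom : ¬ GWCommutes Γ m m')
    (Px Qx : Set (V × Bool)) (hPx : P.IsSide Px) (hQx : Q.IsSide Qx)
    (hdisj : Px ∩ Qx = ∅) :
    Px ∩ {x : V × Bool | x.1 ∈ Γ.neighborSet m'} = ∅ := by
  have hPsub : Px ⊆ {x : V × Bool | x.1 ∉ Γ.neighborSet m} := by
    rcases hPx with h | h <;> subst h <;>
      [exact (P.union_sides ▸ Set.subset_union_left : _);
       exact (P.union_sides ▸ Set.subset_union_right : _)]
  rw [GWCommutes, not_and_or, not_ne_iff] at hncom
  rcases hncom with rfl | hnadj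
  · ext x
    simp only [Set.mem_inter_iff, Set.mem_setOf_eq, Set.mem_empty_iff_false, iff_false,
      not_and]
    intro hx
    exact hPsub hx
  · ext x
    simp only [Set.mem_inter_iff, Set.mem_setOf_eq, Set.mem_empty_iff_false, iff_false,
      not_and]
    intro hx hxl
    -- x.1 ∈ lk(m'), x ∈ Px; derive contradiction
    have hne : m ≠ m' := by rintro rfl; exact hPsub hx hxl
    have hv_not_star : x.1 ∈ {y : V | y ∉ gstar Γ m} := by
      intro h
      rcases h with h | h
      · exact hnadj (((Γ.mem_neighborSet m' m).mp (h ▸ hxl)).symm)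
      · exact hPsub hx h
    have hm'_not_star : m' ∈ {y : V | y ∉ gstar Γ m} := by
      intro h
      rcases h with h | h
      · exact hne h.symm
      · exact hnadj h
    have hvne : x.1 ≠ m' := fun h => Γ.irrefl (h ▸ hxl)
    have hadj : (Γ.induce {y : V | y ∉ gstar Γ m}).Adj ⟨x.1, hv_not_star⟩ ⟨m', hm'_not_star⟩ := by
      exact ((Γ.mem_neighborSet m' x.1).mp hxl).symm
    have hcc := P.component_const ⟨x.1, hv_not_star⟩ ⟨m', hm'_not_star⟩ hvne hadj.reachable
    have hall : ({(x.1, true), (x.1, false), (m', true), (m', false)} : Set (V × Bool)) ⊆ Px := by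
      have hxmem : x ∈ ({(x.1, true), (x.1, false), (m', true), (m', false)} : Set (V × Bool)) := by
        rcases Bool.eq_false_or_eq_true x.2 with h | h <;>
          simp [Set.mem_insert_iff, Prod.ext_iff, h]
      rcases hcc with hcc | hcc <;> rcases hPx with h | h <;> subst h
      · exact hcc
      · exact absurd (P.disjoint_sides.ne_of_mem (hcc hxmem) hx rfl) (fun h => h)
      · exact absurd (P.disjoint_sides.ne_of_mem hx (hcc hxmem) rfl) (fun h => h)
      · exact hcc
    have hmt : (m', true) ∈ Px := hall (by simp)
    have hmf : (m', false) ∈ Px := hall (by simp)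
    rcases hQx with h | h <;> subst h
    · exact Set.eq_empty_iff_forall_notMem.mp hdisj (m', true) ⟨hmt, Q.base_plus⟩
    · exact Set.eq_empty_iff_forall_notMem.mp hdisj (m', false) ⟨hmf, Q.base_minus⟩

/-- If `P` (based at `m`) and `Q` (based at `m'`) do not commute and have
disjoint sides `Px` and `Qx`, then `Px` misses `lk(Q) = lk(m')±` and is
contained in the other side `Qbar` of `Q`; symmetrically for `Qx`. -/
theorem stmt_8 {m' : V} (P : GWPartition Γ m) (Q : GWPartition Γ m')
    (hncom : ¬ GWCommutes Γ m m')
    (Px Pbar Qx Qbar : Set (V × Bool))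
    (hP : (Px = P.plus ∧ Pbar = P.minus) ∨ (Px = P.minus ∧ Pbar = P.plus))
    (hQ : (Qx = Q.plus ∧ Qbar = Q.minus) ∨ (Qx = Q.minus ∧ Qbar = Q.plus))
    (hdisj : Px ∩ Qx = ∅) :
    Px ∩ {x : V × Bool | x.1 ∈ Γ.neighborSet m'} = ∅ ∧ Px ⊆ Qbar ∧
    Qx ∩ {x : V × Bool | x.1 ∈ Γ.neighborSet m} = ∅ ∧ Qx ⊆ Pbar := by
  have hncom' : ¬ GWCommutes Γ m' m := fun ⟨h1, h2⟩ => hncom ⟨h1.symm, h2.symm⟩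
  have hdisj' : Qx ∩ Px = ∅ := by rw [Set.inter_comm]; exact hdisj
  have hPx : P.IsSide Px := by rcases hP with ⟨h, _⟩ | ⟨h, _⟩ <;> [left; right] <;> exact h
  have hQx : Q.IsSide Qx := by rcases hQ with ⟨h, _⟩ | ⟨h, _⟩ <;> [left; right] <;> exact h
  have k1 := gw_key P Q hncom Px Qx hPx hQx hdisj
  have k2 := gw_key Q P hncom' Qx Px hQx hPx hdisj'
  refine ⟨k1, ?_, k2, ?_⟩
  · intro x hx
    have hnl : x.1 ∉ Γ.neighborSet m' :=
      fun h => Set.eq_empty_iff_forall_notMem.mp k1 x ⟨hx, h⟩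
    have hxu : x ∈ Q.plus ∪ Q.minus := Q.union_sides ▸ hnl
    have hxq : x ∉ Qx := fun h => Set.eq_empty_iff_forall_notMem.mp hdisj x ⟨hx, h⟩
    rcases hQ with ⟨h1, h2⟩ | ⟨h1, h2⟩ <;> subst h1 <;> subst h2 <;>
      rcases hxu with h | h <;> first | exact absurd h hxq | exact h
  · intro x hx
    have hnl : x.1 ∉ Γ.neighborSet m :=
      fun h => Set.eq_empty_iff_forall_notMem.mp k2 x ⟨hx, h⟩
    have hxu : x ∈ P.plus ∪ P.minus := P.union_sides ▸ hnl
    have hxp : x ∉ Px := fun h => Set.eq_empty_iff_forall_notMem.mp hdisj x ⟨h, hx⟩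
    rcases hP with ⟨h1, h2⟩ | ⟨h1, h2⟩ <;> subst h1 <;> subst h2 <;>
      rcases hxu with h | h <;> first | exact absurd h hxp | exact h
end

section
/- Let Π be a finite collection of pairwise-compatible Γ-Whitehead partitions (each with a chosen base). Then any consistent choice of sides for a subset of Π can be extended to a region, i.e. to a consistent choice of sides for all of Π. -/
/-! Sides are added one member at a time. If `Q` does not commute with `P`, a side of `Q`
disjoint from one side of `P` lies inside the other side. So if neither side of `P` could be
added, two chosen sides would lie in opposite sides of `P`; consistency then forces them to
commute, and their adjacent bases put both sides into the same side of `P`. -/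

variable {V : Type*}

variable [Fintype V] {Γ : SimpleGraph V} {m : V}

section Graph

variable {W : Type*} {G : SimpleGraph W}

lemma notMem_gstar_iff {v w : W} : v ∉ gstar G w ↔ v ≠ w ∧ ¬G.Adj w v := by
  simp [gstar]

lemma notMem_gstar_of_not_commutes {v w : W} (h : ¬GWCommutes G v w) (hne : v ≠ w) :
    v ∉ gstar G w :=
  notMem_gstar_iff.mpr ⟨hne, fun hadj => h ⟨hne, hadj.symm⟩⟩

lemma GWCommutes.symm {v w : W} (h : GWCommutes G v w) : GWCommutes G w v :=
  ⟨h.1.symm, h.2.symm⟩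

end Graph

namespace GWPartition

variable {m' : V} {P : GWPartition Γ m} {A B : Set (V × Bool)}

lemma IsSide.exists_base_mem (h : P.IsSide B) : ∃ b, (m, b) ∈ B := by
  rcases h with rfl | rfl
  exacts [⟨true, P.base_plus⟩, ⟨false, P.base_minus⟩]

lemma IsSide.fst_notMem_neighborSet (h : P.IsSide B) {x : V × Bool} (hx : x ∈ B) :
    x.1 ∉ Γ.neighborSet m := by
  have hx' : x ∈ P.plus ∪ P.minus := by
    rcases h with rfl | rfl
    exacts [Or.inl hx, Or.inr hx]
  rwa [P.union_sides] at hx'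

lemma IsSide.mem_of_adj (hB : P.IsSide B) {u v : V} (hu : u ∉ gstar Γ m)
    (hv : v ∉ gstar Γ m) (huv : Γ.Adj u v) {b : Bool} (hub : (u, b) ∈ B) (c : Bool) :
    (v, c) ∈ B := by
  have hreach : (Γ.induce {x | x ∉ gstar Γ m}).Reachable ⟨u, hu⟩ ⟨v, hv⟩ :=
    SimpleGraph.Adj.reachable (by simpa using huv)
  have hu4 : (u, b) ∈ ({(u, true), (u, false), (v, true), (v, false)} : Set (V × Bool)) := by
    cases b <;> simp
  have hv4 : (v, c) ∈ ({(u, true), (u, false), (v, true), (v, false)} : Set (V × Bool)) := by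
    cases c <;> simp
  have hdisj := Set.disjoint_left.mp P.disjoint_sides
  rcases P.component_const ⟨u, hu⟩ ⟨v, hv⟩ huv.ne hreach with h4 | h4 <;>
    rcases hB with rfl | rfl
  · exact h4 hv4
  · exact absurd hub (hdisj (h4 hu4))
  · exact absurd (h4 hu4) (hdisj hub)
  · exact h4 hv4

/-- If `B` met `lk(m)±`, it would contain both copies of the base `m` of `P`, since `m` and
that vertex are adjacent and outside `st(m')`; but one of them lies in `A`. -/
lemma IsSide.subset_sides_of_disjoint {Q : GWPartition Γ m'} (hB : Q.IsSide B)
    (hA : P.IsSide A) (hnc : ¬GWCommutes Γ m m') (hd : Disjoint B A) :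
    B ⊆ P.plus ∪ P.minus := by
  intro x hx
  rw [P.union_sides]
  intro hxm
  have hx' := hB.fst_notMem_neighborSet hx
  have hne : m ≠ m' := by
    rintro rfl
    exact hx' hxm
  have hxst : x.1 ∉ gstar Γ m' :=
    notMem_gstar_iff.mpr ⟨fun h => hnc ⟨hne, h ▸ hxm⟩, hx'⟩
  obtain ⟨b, hbA⟩ := hA.exists_base_mem
  have hbB := hB.mem_of_adj hxst (notMem_gstar_of_not_commutes hnc hne) hxm.symm
    (b := x.2) hx b
  exact Set.disjoint_left.mp hd hbB hbA

end GWPartition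

section Consistency

variable {ι : Type*} {base : ι → V}

def IsConsistentOn (P : (i : ι) → GWPartition Γ (base i)) (S : Set ι)
    (σ : ι → Set (V × Bool)) : Prop :=
  (∀ i ∈ S, (P i).IsSide (σ i)) ∧
    ∀ i ∈ S, ∀ j ∈ S, i ≠ j →
      GWCommutes Γ (base i) (base j) ∨ (σ i ∩ σ j).Nonempty

variable {P : (i : ι) → GWPartition Γ (base i)} {S : Set ι} {σ : ι → Set (V × Bool)}

lemma IsConsistentOn.exists_side (h : IsConsistentOn P S σ) (i : ι) :
    ∃ B, (P i).IsSide B ∧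
      ∀ j ∈ S, GWCommutes Γ (base j) (base i) ∨ (σ j ∩ B).Nonempty := by
  by_contra! hcon
  obtain ⟨j₁, hj₁, hnc₁, hd₁⟩ := hcon (P i).plus (Or.inl rfl)
  obtain ⟨j₂, hj₂, hnc₂, hd₂⟩ := hcon (P i).minus (Or.inr rfl)
  have hdisj := Set.disjoint_left.mp (P i).disjoint_sides
  have h₁ : σ j₁ ⊆ (P i).minus := fun x hx =>
    ((h.1 j₁ hj₁).subset_sides_of_disjoint (Or.inl rfl)
      (fun hc => hnc₁ hc.symm) (Set.disjoint_iff_inter_eq_empty.mpr hd₁) hx).resolve_left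
      fun hp => Set.eq_empty_iff_forall_notMem.mp hd₁ x ⟨hx, hp⟩
  have h₂ : σ j₂ ⊆ (P i).plus := fun x hx =>
    ((h.1 j₂ hj₂).subset_sides_of_disjoint (Or.inr rfl)
      (fun hc => hnc₂ hc.symm) (Set.disjoint_iff_inter_eq_empty.mpr hd₂) hx).resolve_right
      fun hm => Set.eq_empty_iff_forall_notMem.mp hd₂ x ⟨hx, hm⟩
  obtain ⟨b₁, hb₁⟩ := (h.1 j₁ hj₁).exists_base_mem
  obtain ⟨b₂, hb₂⟩ := (h.1 j₂ hj₂).exists_base_mem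
  rcases eq_or_ne j₁ j₂ with rfl | hne
  · exact hdisj (h₂ hb₁) (h₁ hb₁)
  rcases h.2 j₁ hj₁ j₂ hj₂ hne with ⟨hne', hadj⟩ | ⟨x, hx₁, hx₂⟩
  · -- a base equal to `base i` would make the other one commute with `P i`
    have hst₁ : base j₁ ∉ gstar Γ (base i) := by
      refine notMem_gstar_of_not_commutes hnc₁ fun he => hnc₂ ?_
      exact ⟨fun he' => hne' (he.trans he'.symm), he ▸ hadj.symm⟩
    have hst₂ : base j₂ ∉ gstar Γ (base i) := by
      refine notMem_gstar_of_not_commutes hnc₂ fun he => hnc₁ ?_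
      exact ⟨fun he' => hne' (he'.trans he.symm), he ▸ hadj⟩
    exact hdisj (h₂ hb₂)
      (GWPartition.IsSide.mem_of_adj (Or.inr rfl) hst₁ hst₂ hadj (h₁ hb₁) b₂)
  · exact hdisj (h₂ hx₂) (h₁ hx₁)

lemma IsConsistentOn.exists_insert (h : IsConsistentOn P S σ) (i : ι) :
    ∃ σ', IsConsistentOn P (insert i S) σ' ∧ Set.EqOn σ' σ S := by
  classical
  by_cases hi : i ∈ S
  · exact ⟨σ, by rwa [Set.insert_eq_of_mem hi], Set.eqOn_refl σ S⟩
  obtain ⟨B, hB, hBS⟩ := h.exists_side i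
  have hupd : ∀ j ∈ S, Function.update σ i B j = σ j := fun j hj =>
    Function.update_of_ne (ne_of_mem_of_not_mem hj hi) B σ
  refine ⟨Function.update σ i B, ⟨?_, ?_⟩, hupd⟩
  · rintro j (rfl | hj)
    · simpa using hB
    · simpa [hupd j hj] using h.1 j hj
  · rintro j (rfl | hj) k (rfl | hk) hjk
    · exact absurd rfl hjk
    · rw [Function.update_self, hupd k hk, Set.inter_comm]
      exact (hBS k hk).imp GWCommutes.symm id
    · rw [Function.update_self, hupd j hj]
      exact hBS j hj
    · simpa [hupd j hj, hupd k hk] using h.2 j hj k hk hjk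

lemma IsConsistentOn.exists_union_finset (h : IsConsistentOn P S σ) (T : Finset ι) :
    ∃ σ', IsConsistentOn P (S ∪ T) σ' ∧ Set.EqOn σ' σ S := by
  classical
  induction T using Finset.induction_on with
  | empty => exact ⟨σ, by simpa using h, Set.eqOn_refl σ S⟩
  | insert i T _ ih =>
    obtain ⟨σ₁, h₁, hσ₁⟩ := ih
    obtain ⟨σ₂, h₂, hσ₂⟩ := h₁.exists_insert i
    refine ⟨σ₂, ?_, fun j hj => (hσ₂ (Or.inl hj)).trans (hσ₁ hj)⟩
    rwa [Finset.coe_insert, Set.union_insert]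

end Consistency

theorem stmt_9_general {ι : Type*} [Fintype ι] (base : ι → V)
    (P : (i : ι) → GWPartition Γ (base i))
    (S : Set ι) (σ : ι → Set (V × Bool))
    (hside : ∀ i ∈ S, (P i).IsSide (σ i))
    (hcons : ∀ i ∈ S, ∀ j ∈ S, i ≠ j →
      GWCommutes Γ (base i) (base j) ∨ (σ i ∩ σ j).Nonempty) :
    ∃ σ' : ι → Set (V × Bool),
      (∀ i ∈ S, σ' i = σ i) ∧
      (∀ i, (P i).IsSide (σ' i)) ∧
      (∀ i j, i ≠ j →
        GWCommutes Γ (base i) (base j) ∨ (σ' i ∩ σ' j).Nonempty) := by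
  obtain ⟨σ', ⟨hside', hcons'⟩, hσ'⟩ :=
    IsConsistentOn.exists_union_finset (P := P) ⟨hside, hcons⟩ Finset.univ
  have hall : ∀ i, i ∈ S ∪ (Finset.univ : Finset ι) := by simp
  exact ⟨σ', fun i hi => hσ' hi, fun i => hside' i (hall i),
    fun i j hij => hcons' i (hall i) j (hall j) hij⟩

/-- Given a finite collection of pairwise-compatible Γ-Whitehead partitions
(indexed by `ι`, with chosen bases), any consistent choice of sides for the
members indexed by a subset `S` extends to a region, i.e. to a consistent
choice of sides for all members.  Here a choice of sides is consistent if any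
two distinct non-commuting members have intersecting chosen sides. -/
theorem stmt_9 {ι : Type*} [Fintype ι] (base : ι → V)
    (P : (i : ι) → GWPartition Γ (base i))
    (hcompat : ∀ i j, i ≠ j → GWCompatible (P i) (P j))
    (S : Set ι) (σ : ι → Set (V × Bool))
    (hside : ∀ i ∈ S, (P i).IsSide (σ i))
    (hcons : ∀ i ∈ S, ∀ j ∈ S, i ≠ j →
      GWCommutes Γ (base i) (base j) ∨ (σ i ∩ σ j).Nonempty) :
    ∃ σ' : ι → Set (V × Bool),
      (∀ i ∈ S, σ' i = σ i) ∧
      (∀ i, (P i).IsSide (σ' i)) ∧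
      (∀ i j, i ≠ j →
        GWCommutes Γ (base i) (base j) ∨ (σ' i ∩ σ' j).Nonempty) :=
  stmt_9_general base P S σ hside hcons
end

section
/- Let v₁, …, v_n be distinct pairwise-adjacent vertices of a finite simple graph Γ, and let (e₁,…,e_n) and (e₁′,…,e_n′) be allowable tuples of linearly independent vectors in real inner product spaces E and E′ respectively. If ‖e_i‖ = ‖e_i′‖ for all i, and ⟨e_i, e_j⟩ = ⟨e_i′, e_j′⟩ for all pairs i ≠ j such that v_i and v_j are twist-related, then ⟨e_i, e_j⟩ = ⟨e_i′, e_j′⟩ for all i, j. (An allowable parallelotope metric is determined by its edge lengths and the angles between twist-related edges.) -/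
variable {V : Type*}

/-- Vertices `v` and `w` are twist-related if `st(v) ⊆ st(w)` or
`st(w) ⊆ st(v)`. -/
def TwistRelated (Γ : SimpleGraph V) (v w : V) : Prop :=
  gstar Γ v ⊆ gstar Γ w ∨ gstar Γ w ⊆ gstar Γ v

variable {E : Type*} [NormedAddCommGroup E] [InnerProductSpace ℝ E]

/-- `K_i`: the span of the vectors `e k` for which `k = i`, or `k ≠ i` and
`st(v i) ⊆ st(v k)`. -/
def Kspan (Γ : SimpleGraph V) {n : ℕ} (v : Fin n → V) (e : Fin n → E)
    (i : Fin n) : Submodule ℝ E :=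
  Submodule.span ℝ (e '' {k | k = i ∨ (k ≠ i ∧ gstar Γ (v i) ⊆ gstar Γ (v k))})

/-- The tuple `e` is allowable if for all `i`, `j` with `v i`, `v j` not
twist-related, the subspaces `K_i ∩ L_ij^⊥` and `K_j ∩ L_ij^⊥` are orthogonal,
where `L_ij = K_i ∩ K_j`. -/
def Allowable (Γ : SimpleGraph V) {n : ℕ} (v : Fin n → V) (e : Fin n → E) :
    Prop :=
  ∀ i j : Fin n, ¬ TwistRelated Γ (v i) (v j) →
    ∀ x ∈ Kspan Γ v e i ⊓ (Kspan Γ v e i ⊓ Kspan Γ v e j)ᗮ,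
      ∀ y ∈ Kspan Γ v e j ⊓ (Kspan Γ v e i ⊓ Kspan Γ v e j)ᗮ,
        (inner ℝ x y : ℝ) = 0

/-!
Write `U(i)` (`starUpper`) for the set of `k` with `st(v_i) ⊆ st(v_k)`, so that `K_i` is spanned
by the `e_k` with `k ∈ U(i)` and, by linear independence, `L_ij` by those with `k ∈ U(i) ∩ U(j)`.
For non-twist-related `i, j`, allowability gives `⟨e_i, e_j⟩ = ⟨P e_i, P e_j⟩` with `P` the
orthogonal projection onto `L_ij`, and the right side only depends on the inner products among
the `e_k`, `k ∈ U(i) ∩ U(j)`, and of these with `e_i` and `e_j`. Each `k ∈ U(i) ∩ U(j)` is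
twist-related to `i` and `j`, and a non-twist-related pair `k, l` in `U(i) ∩ U(j)` has strictly
smaller `U(k) ∩ U(l)` (it misses `k`), so induction on `|U(i) ∩ U(j)|` determines every entry.
-/

open Submodule
open scoped RealInnerProductSpace

theorem LinearIndependent.span_image_inf_span_image {ι R M : Type*} [Ring R] [AddCommGroup M]
    [Module R M] {f : ι → M} (hf : LinearIndependent R f) (s t : Set ι) :
    span R (f '' s) ⊓ span R (f '' t) = span R (f '' (s ∩ t)) := by
  simp only [Finsupp.span_image_eq_map_linearCombination, Finsupp.supported_inter,
    Submodule.map_inf _ hf]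

instance finiteDimensional_span_image {ι : Type*} [Finite ι] (f : ι → E) (s : Set ι) :
    FiniteDimensional ℝ (span ℝ (f '' s)) :=
  FiniteDimensional.span_of_finite ℝ (s.toFinite.image f)

theorem inner_starProjection_starProjection (K : Submodule ℝ E) [K.HasOrthogonalProjection]
    (x y : E) : ⟪K.starProjection x, K.starProjection y⟫ = ⟪K.starProjection x, y⟫ := by
  rw [← inner_starProjection_left_eq_right,
    starProjection_eq_self_iff.mpr (K.starProjection_apply_mem x)]

theorem inner_eq_inner_starProjection_of_isOrtho {K K' L : Submodule ℝ E}
    [L.HasOrthogonalProjection] (hL : L ≤ K) (hL' : L ≤ K') (h : K ⊓ Lᗮ ⟂ K' ⊓ Lᗮ) {x y : E}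
    (hx : x ∈ K) (hy : y ∈ K') :
    ⟪x, y⟫ = ⟪L.starProjection x, L.starProjection y⟫ := by
  have hx' : x - L.starProjection x ∈ K ⊓ Lᗮ :=
    ⟨K.sub_mem hx (hL (L.starProjection_apply_mem x)), L.sub_starProjection_mem_orthogonal x⟩
  have hy' : y - L.starProjection y ∈ K' ⊓ Lᗮ :=
    ⟨K'.sub_mem hy (hL' (L.starProjection_apply_mem y)), L.sub_starProjection_mem_orthogonal y⟩
  have h₁ := h.inner_eq hx' hy'
  have h₂ := L.starProjection_inner_eq_zero x _ (L.starProjection_apply_mem y)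
  have h₃ := L.starProjection_inner_eq_zero y _ (L.starProjection_apply_mem x)
  simp only [inner_sub_left, inner_sub_right] at h₁ h₂ h₃
  linarith [real_inner_comm y (L.starProjection x),
    real_inner_comm (L.starProjection x) (L.starProjection y)]

section GramMatrix

variable {ι E' : Type*} [NormedAddCommGroup E'] [InnerProductSpace ℝ E']
  {f : ι → E} {f' : ι → E'} {s : Set ι}

theorem inner_linearCombination_eq {c : ι →₀ ℝ} (hc : c ∈ Finsupp.supported ℝ ℝ s) {z : E}
    {z' : E'} (h : ∀ k ∈ s, ⟪f k, z⟫ = ⟪f' k, z'⟫) :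
    ⟪Finsupp.linearCombination ℝ f c, z⟫ = ⟪Finsupp.linearCombination ℝ f' c, z'⟫ := by
  simp only [Finsupp.linearCombination_apply, Finsupp.sum, sum_inner, real_inner_smul_left]
  exact Finset.sum_congr rfl fun k hk => by rw [h k (hc hk)]

variable [(span ℝ (f '' s)).HasOrthogonalProjection] [(span ℝ (f' '' s)).HasOrthogonalProjection]

theorem starProjection_span_image_eq_linearCombination
    (hf : ∀ k ∈ s, ∀ l ∈ s, ⟪f k, f l⟫ = ⟪f' k, f' l⟫) {x : E} {x' : E'}
    (hx : ∀ k ∈ s, ⟪f k, x⟫ = ⟪f' k, x'⟫) {c : ι →₀ ℝ} (hc : c ∈ Finsupp.supported ℝ ℝ s)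
    (hpx : (span ℝ (f '' s)).starProjection x = Finsupp.linearCombination ℝ f c) :
    (span ℝ (f' '' s)).starProjection x' = Finsupp.linearCombination ℝ f' c := by
  refine eq_starProjection_of_mem_of_inner_eq_zero
    ((Finsupp.mem_span_image_iff_linearCombination ℝ).2 ⟨c, hc, rfl⟩) fun w hw => ?_
  rw [← mem_orthogonal_singleton_iff_inner_right]
  refine (span_le.2 ?_ : span ℝ (f' '' s) ≤ _) hw
  rintro _ ⟨m, hm, rfl⟩
  have hperp := (span ℝ (f '' s)).starProjection_inner_eq_zero x (f m) (subset_span ⟨m, hm, rfl⟩)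
  rw [hpx, inner_sub_left, inner_linearCombination_eq hc fun k hk => hf k hk m hm] at hperp
  rw [SetLike.mem_coe, mem_orthogonal_singleton_iff_inner_right, inner_sub_left,
    real_inner_comm, ← hx m hm, real_inner_comm, hperp]

theorem inner_starProjection_span_image_eq (hf : ∀ k ∈ s, ∀ l ∈ s, ⟪f k, f l⟫ = ⟪f' k, f' l⟫)
    {x y : E} {x' y' : E'} (hx : ∀ k ∈ s, ⟪f k, x⟫ = ⟪f' k, x'⟫)
    (hy : ∀ k ∈ s, ⟪f k, y⟫ = ⟪f' k, y'⟫) :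
    ⟪(span ℝ (f '' s)).starProjection x, (span ℝ (f '' s)).starProjection y⟫ =
      ⟪(span ℝ (f' '' s)).starProjection x', (span ℝ (f' '' s)).starProjection y'⟫ := by
  obtain ⟨c, hc, hpx⟩ := (Finsupp.mem_span_image_iff_linearCombination ℝ).1
    ((span ℝ (f '' s)).starProjection_apply_mem x)
  rw [inner_starProjection_starProjection, inner_starProjection_starProjection, ← hpx,
    starProjection_span_image_eq_linearCombination hf hx hc hpx.symm]
  exact inner_linearCombination_eq hc hy

end GramMatrix

def starUpper {ι : Type*} (Γ : SimpleGraph V) (v : ι → V) (i : ι) : Set ι :=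
  {k | gstar Γ (v i) ⊆ gstar Γ (v k)}

section Allowable

variable {Γ : SimpleGraph V} {n : ℕ} {v : Fin n → V}

theorem Kspan_eq_span_starUpper (e : Fin n → E) (i : Fin n) :
    Kspan Γ v e i = span ℝ (e '' starUpper Γ v i) := by
  unfold Kspan starUpper
  congr 2
  ext k
  by_cases hk : k = i <;> simp [hk]

theorem Kspan_inf_Kspan {e : Fin n → E} (he : LinearIndependent ℝ e) (i j : Fin n) :
    Kspan Γ v e i ⊓ Kspan Γ v e j = span ℝ (e '' (starUpper Γ v i ∩ starUpper Γ v j)) := by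
  rw [Kspan_eq_span_starUpper, Kspan_eq_span_starUpper, he.span_image_inf_span_image]

theorem starUpper_inter_ssubset {i j k l : Fin n} (hk : k ∈ starUpper Γ v i ∩ starUpper Γ v j)
    (hkl : ¬TwistRelated Γ (v k) (v l)) :
    starUpper Γ v k ∩ starUpper Γ v l ⊂ starUpper Γ v i ∩ starUpper Γ v j := by
  exact Set.ssubset_iff_exists.2
    ⟨fun m hm => ⟨Set.Subset.trans hk.1 hm.1, Set.Subset.trans hk.2 hm.1⟩, k, hk,
      fun hk' => hkl (Or.inr hk'.2)⟩

theorem Allowable.inner_eq_inner_starProjection {e : Fin n → E} (hA : Allowable Γ v e)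
    (he : LinearIndependent ℝ e) {i j : Fin n} (hij : ¬TwistRelated Γ (v i) (v j)) :
    ⟪e i, e j⟫ =
      ⟪(span ℝ (e '' (starUpper Γ v i ∩ starUpper Γ v j))).starProjection (e i),
        (span ℝ (e '' (starUpper Γ v i ∩ starUpper Γ v j))).starProjection (e j)⟫ := by
  have hL := Kspan_inf_Kspan (Γ := Γ) (v := v) he i j
  have hortho := isOrtho_iff_inner_eq.2 (hA i j hij)
  rw [hL] at hortho
  exact inner_eq_inner_starProjection_of_isOrtho (hL ▸ inf_le_left) (hL ▸ inf_le_right) hortho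
    (subset_span ⟨i, Or.inl rfl, rfl⟩) (subset_span ⟨j, Or.inl rfl, rfl⟩)

end Allowable

theorem stmt_10_general (Γ : SimpleGraph V) {n : ℕ} (v : Fin n → V)
    {E' : Type*} [NormedAddCommGroup E'] [InnerProductSpace ℝ E']
    (e : Fin n → E) (e' : Fin n → E')
    (he : LinearIndependent ℝ e) (he' : LinearIndependent ℝ e')
    (hA : Allowable Γ v e) (hA' : Allowable Γ v e')
    (hnorm : ∀ i, ‖e i‖ = ‖e' i‖)
    (htw : ∀ i j : Fin n, i ≠ j → TwistRelated Γ (v i) (v j) →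
      (inner ℝ (e i) (e j) : ℝ) = (inner ℝ (e' i) (e' j) : ℝ)) :
    ∀ i j : Fin n, (inner ℝ (e i) (e j) : ℝ) = (inner ℝ (e' i) (e' j) : ℝ) := by
  have htwist : ∀ i j, TwistRelated Γ (v i) (v j) → ⟪e i, e j⟫ = ⟪e' i, e' j⟫ := by
    intro i j hij
    rcases eq_or_ne i j with rfl | hne
    · rw [real_inner_self_eq_norm_sq, real_inner_self_eq_norm_sq, hnorm]
    · exact htw i j hne hij
  intro i j
  induction hN : (starUpper Γ v i ∩ starUpper Γ v j).ncard using Nat.strong_induction_on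
    generalizing i j with
  | _ N ih =>
  by_cases hij : TwistRelated Γ (v i) (v j)
  · exact htwist i j hij
  have hgram : ∀ k ∈ starUpper Γ v i ∩ starUpper Γ v j, ∀ l ∈ starUpper Γ v i ∩ starUpper Γ v j,
      ⟪e k, e l⟫ = ⟪e' k, e' l⟫ := by
    intro k hk l _
    by_cases hkl : TwistRelated Γ (v k) (v l)
    · exact htwist k l hkl
    · exact ih _ (hN ▸ Set.ncard_lt_ncard (starUpper_inter_ssubset hk hkl)) k l rfl
  rw [hA.inner_eq_inner_starProjection he hij, hA'.inner_eq_inner_starProjection he' hij]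
  exact inner_starProjection_span_image_eq hgram (fun k hk => htwist k i (Or.inr hk.1))
    (fun k hk => htwist k j (Or.inr hk.2))

/-- An allowable parallelotope metric is determined by its edge lengths and the
angles between twist-related edges: if two allowable tuples of linearly
independent vectors (spanning parallelotopes with edges indexed by the distinct
pairwise-adjacent vertices `v 1, …, v n`) have the same edge lengths and the
same inner products on twist-related pairs, then all their inner products
agree. -/
theorem stmt_10 [Fintype V] (Γ : SimpleGraph V) {n : ℕ} (v : Fin n → V)
    (hvinj : Function.Injective v)
    (hadj : ∀ i j : Fin n, i ≠ j → Γ.Adj (v i) (v j))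
    {E' : Type*} [NormedAddCommGroup E'] [InnerProductSpace ℝ E']
    (e : Fin n → E) (e' : Fin n → E')
    (he : LinearIndependent ℝ e) (he' : LinearIndependent ℝ e')
    (hA : Allowable Γ v e) (hA' : Allowable Γ v e')
    (hnorm : ∀ i, ‖e i‖ = ‖e' i‖)
    (htw : ∀ i j : Fin n, i ≠ j → TwistRelated Γ (v i) (v j) →
      (inner ℝ (e i) (e j) : ℝ) = (inner ℝ (e' i) (e' j) : ℝ)) :
    ∀ i j : Fin n, (inner ℝ (e i) (e j) : ℝ) = (inner ℝ (e' i) (e' j) : ℝ) :=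
  stmt_10_general Γ v e e' he he' hA hA' hnorm htw
end

section
/- Let v₁, …, v_n, (e₁,…,e_n), ≺ and (b₁,…,b_n) be as described, and suppose the tuple (e₁,…,e_n) is allowable. Set r_i = ⟨e_i, b_i⟩ and c_i = e_i − r_i b_i; then r_i > 0 and c_i ∈ K_i^≺. For t ∈ [0,1] set e_i^t = (‖e_i‖ / ‖r_i b_i + t c_i‖) · (r_i b_i + t c_i). Then for every t ∈ [0,1] the vectors e₁^t, …, e_n^t are linearly independent with ‖e_i^t‖ = ‖e_i‖ for all i, the tuple (e₁^t,…,e_n^t) is allowable, e_i^1 = e_i, and the vectors e₁^0, …, e_n^0 are pairwise orthogonal. -/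
variable {V : Type*}

variable {E : Type*} [NormedAddCommGroup E] [InnerProductSpace ℝ E]

/-- `K_i^≺`: the span of the vectors `e k` with `k ≠ i`, `st(v i) ⊆ st(v k)`
and `i ≺ k`. -/
def KprecSpan (Γ : SimpleGraph V) {n : ℕ} (v : Fin n → V) (e : Fin n → E)
    (prec : Fin n → Fin n → Prop) (i : Fin n) : Submodule ℝ E :=
  Submodule.span ℝ
    (e '' {k | k ≠ i ∧ gstar Γ (v i) ⊆ gstar Γ (v k) ∧ prec i k})

/-- The straightening path: with `r i = ⟪e i, b i⟫` and `c i = e i - r i • b i`,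
`shearPath e b t i` is the vector `r i • b i + t • c i` rescaled to have the
same norm as `e i`. -/
noncomputable def shearPath {n : ℕ} (e b : Fin n → E) (t : ℝ) (i : Fin n) : E :=
  (‖e i‖ / ‖(inner ℝ (e i) (b i) : ℝ) • b i + t • (e i - (inner ℝ (e i) (b i) : ℝ) • b i)‖) •
    ((inner ℝ (e i) (b i) : ℝ) • b i + t • (e i - (inner ℝ (e i) (b i) : ℝ) • b i))

/-! Since `b i` is a unit vector of `K_i^≺ + ℝ e_i` orthogonal to `K_i^≺`, we have
`e_i = r_i b_i + c_i` with `c_i ∈ K_i^≺`, so `e_i^t` is a nonzero multiple of `e_i` plus a vector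
of `K_i^≺`. This change of vectors is triangular for `≺`, and `K_i^≺` only involves indices whose
star contains `st(v_i)`; hence the tuple stays linearly independent and every `K_i`, and with it
allowability, is constant along the path. At `t = 0` each `e_i^0` is a multiple of `b_i`, and the
`b_i` are pairwise orthogonal: if `v_i, v_j` are twist-related and `i ≺ j`, then
`K_j^≺ + ℝ e_j ⊆ K_i^≺`; otherwise `L_ij ⊆ K_i^≺ ∩ K_j^≺`, so `b_i ∈ K_i ∩ L_ijᗮ`,
`b_j ∈ K_j ∩ L_ijᗮ` and allowability applies. -/

open Submodule

section Triangular

variable {ι K M : Type*} [DivisionRing K] [AddCommGroup M] [Module K M]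

theorem LinearIndependent.span_image_inf_span_image_le {e : ι → M}
    (he : LinearIndependent K e) (s t : Set ι) :
    span K (e '' s) ⊓ span K (e '' t) ≤ span K (e '' (s ∩ t)) := by
  rintro x ⟨hxs, hxt⟩
  have hsplit : span K (e '' s) ≤ span K (e '' (s ∩ t)) ⊔ span K (e '' (s \ t)) := by
    rw [← span_union, ← Set.image_union, Set.inter_union_sdiff]
  obtain ⟨a, ha, c, hc, rfl⟩ := mem_sup.mp (hsplit hxs)
  have hct : c ∈ span K (e '' t) := by
    simpa using sub_mem hxt (span_mono (Set.image_mono Set.inter_subset_right) ha)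
  rw [disjoint_def.mp (he.disjoint_span_image Set.disjoint_sdiff_left) c hc hct, add_zero]
  exact ha

theorem span_image_eq_of_triangular [Finite ι] {r : ι → ι → Prop} [IsStrictOrder ι r]
    {e w : ι → M} {S : Set ι}
    (h : ∀ k ∈ S, ∃ d : K, d ≠ 0 ∧ w k - d • e k ∈ span K (e '' {m | m ∈ S ∧ r k m})) :
    span K (w '' S) = span K (e '' S) := by
  have hup : ∀ k, span K (e '' {m | m ∈ S ∧ r k m}) ≤ span K (e '' S) :=
    fun k => span_mono (Set.image_mono fun m hm => hm.1)
  apply le_antisymm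
  · rw [span_le]
    rintro _ ⟨k, hk, rfl⟩
    obtain ⟨d, -, hd⟩ := h k hk
    simpa using add_mem (hup k hd) (smul_mem _ d (subset_span ⟨k, hk, rfl⟩))
  · rw [span_le]
    rintro _ ⟨k, hk, rfl⟩
    induction k using (Finite.wellFounded_of_trans_of_irrefl (Function.swap r)).induction with
    | _ k ih =>
      obtain ⟨d, hd0, hd⟩ := h k hk
      have hle : span K (e '' {m | m ∈ S ∧ r k m}) ≤ span K (w '' S) := by
        rw [span_le]
        rintro _ ⟨m, ⟨hm, hkm⟩, rfl⟩
        exact ih m hkm hm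
      have hek : e k = d⁻¹ • (w k - (w k - d • e k)) := by
        rw [sub_sub_cancel, smul_smul, inv_mul_cancel₀ hd0, one_smul]
      rw [hek]
      exact smul_mem _ _ (sub_mem (subset_span ⟨k, hk, rfl⟩) (hle hd))

theorem LinearIndependent.of_triangular [Fintype ι] {r : ι → ι → Prop} [IsStrictOrder ι r]
    {e w : ι → M} (he : LinearIndependent K e)
    (h : ∀ k, ∃ d : K, d ≠ 0 ∧ w k - d • e k ∈ span K (e '' {m | r k m})) :
    LinearIndependent K w := by
  have hspan : span K (Set.range w) = span K (Set.range e) := by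
    simpa only [Set.image_univ] using span_image_eq_of_triangular (S := Set.univ)
      fun k _ => by simpa only [Set.mem_univ, true_and] using h k
  rw [linearIndependent_iff_card_eq_finrank_span] at he ⊢
  rwa [Set.finrank, hspan]

end Triangular

section Shear

variable {x b : E}

theorem sub_inner_smul_mem_of_mem_sup_span_singleton {P : Submodule ℝ E} (hb : ‖b‖ = 1)
    (hbP : b ∈ P ⊔ span ℝ {x}) (hbo : b ∈ Pᗮ) : x - inner ℝ x b • b ∈ P := by
  obtain ⟨y, hy, _, hz, hyz⟩ := mem_sup.mp hbP
  obtain ⟨α, rfl⟩ := mem_span_singleton.mp hz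
  have hα : α * inner ℝ x b = 1 := by
    calc α * inner ℝ x b = inner ℝ (y + α • x) b := by
          rw [inner_add_left, real_inner_smul_left, (mem_orthogonal P b).mp hbo y hy, zero_add]
      _ = 1 := by rw [hyz, real_inner_self_eq_norm_sq, hb, one_pow]
  generalize inner ℝ x b = r at hα ⊢
  subst hyz
  rw [smul_add, smul_smul, mul_comm, hα, one_smul, sub_add_cancel_right]
  exact neg_mem (smul_mem _ _ hy)

theorem inner_smul_add_smul_sub_inner_smul (hb : ‖b‖ = 1) (t : ℝ) :
    inner ℝ b (inner ℝ x b • b + t • (x - inner ℝ x b • b)) = inner ℝ x b := by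
  simp only [inner_add_right, inner_sub_right, real_inner_smul_right, real_inner_self_eq_norm_sq,
    hb, real_inner_comm x b]
  ring

theorem smul_add_smul_sub_inner_smul_ne_zero (hb : ‖b‖ = 1) (hr : inner ℝ x b ≠ 0) (t : ℝ) :
    inner ℝ x b • b + t • (x - inner ℝ x b • b) ≠ 0 := by
  intro h
  apply hr
  rw [← inner_smul_add_smul_sub_inner_smul hb t, h, inner_zero_right]

end Shear

section ShearPath

variable {n : ℕ} {e b : Fin n → E} {i : Fin n}

theorem norm_shearPath (hb : ‖b i‖ = 1) (hr : inner ℝ (e i) (b i) ≠ 0) (t : ℝ) :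
    ‖shearPath e b t i‖ = ‖e i‖ := by
  rw [shearPath, norm_smul, norm_div, norm_norm, norm_norm,
    div_mul_cancel₀ _ (norm_ne_zero_iff.mpr (smul_add_smul_sub_inner_smul_ne_zero hb hr t))]

theorem shearPath_one (he : e i ≠ 0) : shearPath e b 1 i = e i := by
  rw [shearPath, one_smul, add_sub_cancel, div_self (norm_ne_zero_iff.mpr he), one_smul]

theorem shearPath_zero (hb : ‖b i‖ = 1) (hr : 0 < inner ℝ (e i) (b i)) :
    shearPath e b 0 i = ‖e i‖ • b i := by
  rw [shearPath, zero_smul, add_zero, norm_smul, Real.norm_of_nonneg hr.le, hb, mul_one, smul_smul,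
    div_mul_cancel₀ _ hr.ne']

theorem exists_shearPath_sub_smul_mem {P : Submodule ℝ E} (he : e i ≠ 0) (hb : ‖b i‖ = 1)
    (hr : inner ℝ (e i) (b i) ≠ 0) (hc : e i - inner ℝ (e i) (b i) • b i ∈ P) (t : ℝ) :
    ∃ d : ℝ, d ≠ 0 ∧ shearPath e b t i - d • e i ∈ P := by
  have hg := smul_add_smul_sub_inner_smul_ne_zero hb hr t
  refine ⟨_, div_ne_zero (norm_ne_zero_iff.mpr he) (norm_ne_zero_iff.mpr hg), ?_⟩
  rw [shearPath, ← smul_sub]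
  refine smul_mem _ _ ?_
  -- `r • b i + t • c` differs from `e i = r • b i + c` by `(t - 1) • c`
  convert smul_mem P (t - 1) hc using 1
  module

end ShearPath

theorem TwistRelated.symm {Γ : SimpleGraph V} {u w : V} (h : TwistRelated Γ u w) :
    TwistRelated Γ w u :=
  Or.symm h

section Graph

variable {Γ : SimpleGraph V} {n : ℕ} {v : Fin n → V} {prec : Fin n → Fin n → Prop}
  {e b : Fin n → E}

theorem Kspan_eq (e : Fin n → E) (i : Fin n) :
    Kspan Γ v e i = span ℝ (e '' {k | gstar Γ (v i) ⊆ gstar Γ (v k)}) := by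
  rw [Kspan]
  congr! 2
  ext k
  by_cases hk : k = i <;> simp [hk]

theorem KprecSpan_sup_span_le_Kspan (e : Fin n → E) (i : Fin n) :
    KprecSpan Γ v e prec i ⊔ span ℝ {e i} ≤ Kspan Γ v e i := by
  rw [Kspan_eq, KprecSpan, ← Set.image_singleton, ← span_union, ← Set.image_union]
  refine span_mono (Set.image_mono ?_)
  rintro k (⟨-, hk, -⟩ | rfl)
  · exact hk
  · exact Set.Subset.rfl

theorem prec_of_gstar_ssubset (hadj : ∀ i j : Fin n, i ≠ j → Γ.Adj (v i) (v j))
    (hprec : ∀ i j : Fin n, Γ.neighborSet (v i) ⊆ gstar Γ (v j) →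
      ¬ Γ.neighborSet (v j) ⊆ gstar Γ (v i) → prec i j) :
    ∀ i j : Fin n, gstar Γ (v i) ⊂ gstar Γ (v j) → prec i j := by
  intro i j h
  have hij : i ≠ j := by
    rintro rfl
    exact ssubset_irrefl _ h
  refine hprec i j ((Set.subset_insert _ _).trans h.subset) fun hlk => h.not_subset ?_
  exact Set.insert_subset (Set.mem_insert_of_mem _ (hadj i j hij)) hlk

theorem Kspan_inf_Kspan_le_KprecSpan (he : LinearIndependent ℝ e)
    (hssub : ∀ i j : Fin n, gstar Γ (v i) ⊂ gstar Γ (v j) → prec i j)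
    {i j : Fin n} (hTR : ¬ TwistRelated Γ (v i) (v j)) :
    Kspan Γ v e i ⊓ Kspan Γ v e j ≤ KprecSpan Γ v e prec i := by
  rw [Kspan_eq, Kspan_eq]
  refine (he.span_image_inf_span_image_le _ _).trans (span_mono (Set.image_mono ?_))
  rintro k ⟨hik, hjk⟩
  have hki : ¬ gstar Γ (v k) ⊆ gstar Γ (v i) := fun h => hTR (Or.inr (hjk.trans h))
  refine ⟨?_, hik, hssub i k ⟨hik, hki⟩⟩
  rintro rfl
  exact hki Set.Subset.rfl

theorem inner_eq_zero_of_not_twistRelated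
    (hb_mem : ∀ i, b i ∈ KprecSpan Γ v e prec i ⊔ span ℝ {e i})
    (hb_orth : ∀ i, b i ∈ (KprecSpan Γ v e prec i)ᗮ)
    (hssub : ∀ i j : Fin n, gstar Γ (v i) ⊂ gstar Γ (v j) → prec i j)
    (he : LinearIndependent ℝ e) (hA : Allowable Γ v e)
    {i j : Fin n} (hTR : ¬ TwistRelated Γ (v i) (v j)) : inner ℝ (b i) (b j) = 0 := by
  have hL_i := Kspan_inf_Kspan_le_KprecSpan he hssub hTR
  have hL_j := inf_comm (Kspan Γ v e i) _ ▸
    Kspan_inf_Kspan_le_KprecSpan he hssub fun h => hTR h.symm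
  exact hA i j hTR _ ⟨KprecSpan_sup_span_le_Kspan e i (hb_mem i), orthogonal_le hL_i (hb_orth i)⟩
    _ ⟨KprecSpan_sup_span_le_Kspan e j (hb_mem j), orthogonal_le hL_j (hb_orth j)⟩

section StrictOrder

variable [IsStrictOrder (Fin n) prec]

theorem KprecSpan_sup_span_le_KprecSpan {i j : Fin n} (hst : gstar Γ (v i) ⊆ gstar Γ (v j))
    (hp : prec i j) : KprecSpan Γ v e prec j ⊔ span ℝ {e j} ≤ KprecSpan Γ v e prec i := by
  rw [KprecSpan, KprecSpan, ← Set.image_singleton, ← span_union, ← Set.image_union]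
  refine span_mono (Set.image_mono ?_)
  rintro k (⟨-, hk, hpk⟩ | rfl)
  · have hik := _root_.trans hp hpk
    exact ⟨ne_of_irrefl' hik, hst.trans hk, hik⟩
  · exact ⟨ne_of_irrefl' hp, hst, hp⟩

theorem inner_eq_zero_of_twistRelated_of_prec
    (hb_mem : ∀ i, b i ∈ KprecSpan Γ v e prec i ⊔ span ℝ {e i})
    (hb_orth : ∀ i, b i ∈ (KprecSpan Γ v e prec i)ᗮ)
    (hssub : ∀ i j : Fin n, gstar Γ (v i) ⊂ gstar Γ (v j) → prec i j)
    {i j : Fin n} (hTR : TwistRelated Γ (v i) (v j)) (hp : prec i j) :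
    inner ℝ (b i) (b j) = 0 := by
  have hst : gstar Γ (v i) ⊆ gstar Γ (v j) := by
    by_contra hst
    exact asymm hp (hssub j i ⟨hTR.resolve_left hst, hst⟩)
  exact (mem_orthogonal' _ _).mp (hb_orth i) _ (KprecSpan_sup_span_le_KprecSpan hst hp (hb_mem j))

theorem Kspan_eq_of_triangular {w : Fin n → E}
    (h : ∀ k, ∃ d : ℝ, d ≠ 0 ∧ w k - d • e k ∈ KprecSpan Γ v e prec k) :
    Kspan Γ v w = Kspan Γ v e := by
  funext i
  rw [Kspan_eq, Kspan_eq]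
  refine span_image_eq_of_triangular (r := prec) fun k hik => ?_
  obtain ⟨d, hd, hk⟩ := h k
  refine ⟨d, hd, span_mono (Set.image_mono ?_) hk⟩
  rintro m ⟨-, hkm, hp⟩
  exact ⟨hik.trans hkm, hp⟩

end StrictOrder

theorem inner_eq_zero_of_ne [IsStrictTotalOrder (Fin n) prec]
    (hb_mem : ∀ i, b i ∈ KprecSpan Γ v e prec i ⊔ span ℝ {e i})
    (hb_orth : ∀ i, b i ∈ (KprecSpan Γ v e prec i)ᗮ)
    (hssub : ∀ i j : Fin n, gstar Γ (v i) ⊂ gstar Γ (v j) → prec i j)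
    (he : LinearIndependent ℝ e) (hA : Allowable Γ v e) {i j : Fin n} (hij : i ≠ j) :
    inner ℝ (b i) (b j) = 0 := by
  by_cases hTR : TwistRelated Γ (v i) (v j)
  · rcases trichotomous_of prec i j with hp | rfl | hp
    · exact inner_eq_zero_of_twistRelated_of_prec hb_mem hb_orth hssub hTR hp
    · exact absurd rfl hij
    · rw [real_inner_comm]
      exact inner_eq_zero_of_twistRelated_of_prec hb_mem hb_orth hssub hTR.symm hp
  · exact inner_eq_zero_of_not_twistRelated hb_mem hb_orth hssub he hA hTR

end Graph

theorem stmt_12_general (Γ : SimpleGraph V) {n : ℕ} (v : Fin n → V)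
    (hadj : ∀ i j : Fin n, i ≠ j → Γ.Adj (v i) (v j))
    (e : Fin n → E) (he : LinearIndependent ℝ e)
    (prec : Fin n → Fin n → Prop) (hso : IsStrictTotalOrder (Fin n) prec)
    (hprec : ∀ i j : Fin n, Γ.neighborSet (v i) ⊆ gstar Γ (v j) →
      ¬ Γ.neighborSet (v j) ⊆ gstar Γ (v i) → prec i j)
    (b : Fin n → E)
    (hb_norm : ∀ i, ‖b i‖ = 1)
    (hb_mem : ∀ i, b i ∈ KprecSpan Γ v e prec i ⊔ Submodule.span ℝ {e i})
    (hb_orth : ∀ i, ∀ x ∈ KprecSpan Γ v e prec i, (inner ℝ (b i) x : ℝ) = 0)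
    (hb_pos : ∀ i, 0 < (inner ℝ (e i) (b i) : ℝ))
    (hA : Allowable Γ v e) :
    (∀ i, 0 < (inner ℝ (e i) (b i) : ℝ)) ∧
    (∀ i, e i - (inner ℝ (e i) (b i) : ℝ) • b i ∈ KprecSpan Γ v e prec i) ∧
    (∀ t : ℝ, t ∈ Set.Icc (0 : ℝ) 1 →
      LinearIndependent ℝ (shearPath e b t) ∧
      (∀ i, ‖shearPath e b t i‖ = ‖e i‖) ∧
      Allowable Γ v (shearPath e b t)) ∧
    (∀ i, shearPath e b 1 i = e i) ∧
    (∀ i j : Fin n, i ≠ j →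
      (inner ℝ (shearPath e b 0 i) (shearPath e b 0 j) : ℝ) = 0) := by
  have hb_orth' : ∀ i, b i ∈ (KprecSpan Γ v e prec i)ᗮ := fun i =>
    (mem_orthogonal' _ _).mpr (hb_orth i)
  have hc : ∀ i, e i - inner ℝ (e i) (b i) • b i ∈ KprecSpan Γ v e prec i := fun i =>
    sub_inner_smul_mem_of_mem_sup_span_singleton (hb_norm i) (hb_mem i) (hb_orth' i)
  have hW : ∀ t i, ∃ d : ℝ, d ≠ 0 ∧ shearPath e b t i - d • e i ∈ KprecSpan Γ v e prec i :=
    fun t i => exists_shearPath_sub_smul_mem (he.ne_zero i) (hb_norm i) (hb_pos i).ne' (hc i) t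
  refine ⟨hb_pos, hc, fun t _ => ⟨?_, fun i => norm_shearPath (hb_norm i) (hb_pos i).ne' t, ?_⟩,
    fun i => shearPath_one (he.ne_zero i), fun i j hij => ?_⟩
  · refine he.of_triangular (r := prec) fun k => ?_
    obtain ⟨d, hd, hk⟩ := hW t k
    exact ⟨d, hd, span_mono (Set.image_mono fun m hm => hm.2.2) hk⟩
  · simpa only [Allowable, Kspan_eq_of_triangular (hW t)] using hA
  · rw [shearPath_zero (hb_norm i) (hb_pos i), shearPath_zero (hb_norm j) (hb_pos j),
      real_inner_smul_left, real_inner_smul_right,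
      inner_eq_zero_of_ne hb_mem hb_orth' (prec_of_gstar_ssubset hadj hprec) he hA hij,
      mul_zero, mul_zero]

/-- Straightening an allowable tuple: with notation as in the previous
statement, for an allowable tuple `e` we have `r i > 0` and `c i ∈ K_i^≺`; for
every `t ∈ [0,1]` the tuple `e^t = shearPath e b t` is linearly independent,
norm-preserving and allowable; `e^1 = e`; and the vectors `e^0 i` are pairwise
orthogonal. -/
theorem stmt_12 [Fintype V] (Γ : SimpleGraph V) {n : ℕ} (v : Fin n → V)
    (hvinj : Function.Injective v)
    (hadj : ∀ i j : Fin n, i ≠ j → Γ.Adj (v i) (v j))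
    (e : Fin n → E) (he : LinearIndependent ℝ e)
    (prec : Fin n → Fin n → Prop) (hso : IsStrictTotalOrder (Fin n) prec)
    (hprec : ∀ i j : Fin n, Γ.neighborSet (v i) ⊆ gstar Γ (v j) →
      ¬ Γ.neighborSet (v j) ⊆ gstar Γ (v i) → prec i j)
    (b : Fin n → E)
    (hb_norm : ∀ i, ‖b i‖ = 1)
    (hb_mem : ∀ i, b i ∈ KprecSpan Γ v e prec i ⊔ Submodule.span ℝ {e i})
    (hb_orth : ∀ i, ∀ x ∈ KprecSpan Γ v e prec i, (inner ℝ (b i) x : ℝ) = 0)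
    (hb_pos : ∀ i, 0 < (inner ℝ (e i) (b i) : ℝ))
    (hA : Allowable Γ v e) :
    (∀ i, 0 < (inner ℝ (e i) (b i) : ℝ)) ∧
    (∀ i, e i - (inner ℝ (e i) (b i) : ℝ) • b i ∈ KprecSpan Γ v e prec i) ∧
    (∀ t : ℝ, t ∈ Set.Icc (0 : ℝ) 1 →
      LinearIndependent ℝ (shearPath e b t) ∧
      (∀ i, ‖shearPath e b t i‖ = ‖e i‖) ∧
      Allowable Γ v (shearPath e b t)) ∧
    (∀ i, shearPath e b 1 i = e i) ∧
    (∀ i j : Fin n, i ≠ j →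
      (inner ℝ (shearPath e b 0 i) (shearPath e b 0 j) : ℝ) = 0) :=
  stmt_12_general Γ v hadj e he prec hso hprec b hb_norm hb_mem hb_orth hb_pos hA
end

section
/- Let Γ be a finite simple graph and let v ≠ w be adjacent vertices of Γ with st(v) ⊆ st(w). Then there is a unique automorphism τ_{v,w} of the right-angled Artin group A_Γ satisfying τ_{v,w}(v) = vw and τ_{v,w}(u) = u for every generator u ≠ v. -/
variable {V : Type*}

/-- The commutator relations of the right-angled Artin group of `Γ`. -/
def raagRels (Γ : SimpleGraph V) : Set (FreeGroup V) :=
  {r | ∃ u v : V, Γ.Adj u v ∧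
    r = FreeGroup.of u * FreeGroup.of v * (FreeGroup.of u)⁻¹ * (FreeGroup.of v)⁻¹}

/-- The right-angled Artin group `A_Γ`, presented with generating set `V` and
one commuting relation for each edge of `Γ`. -/
abbrev RAAG (Γ : SimpleGraph V) := PresentedGroup (raagRels Γ)

/-- The generator of `A_Γ` corresponding to the vertex `v`. -/
def raagGen (Γ : SimpleGraph V) (v : V) : RAAG Γ := PresentedGroup.of v

/-- `φ` is the elementary automorphism of `A_Γ` sending the generator `a` to
`a·b` and fixing every other generator.  (This is the elementary twist
`τ_{a,b}` when `a ≠ b` are adjacent and `st(a) ⊆ st(b)`, and the elementary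
fold `ρ_{a,b}` when `lk(a) ⊆ lk(b)`.) -/
def IsElemAut (Γ : SimpleGraph V) (a c : V) (φ : MulAut (RAAG Γ)) : Prop :=
  φ (raagGen Γ a) = raagGen Γ a * raagGen Γ c ∧
    ∀ u : V, u ≠ a → φ (raagGen Γ u) = raagGen Γ u

lemma raag_comm {Γ : SimpleGraph V} {a b : V} (h : Γ.Adj a b) :
    Commute (raagGen Γ a) (raagGen Γ b) := by
  have hr : (FreeGroup.of a * FreeGroup.of b * (FreeGroup.of a)⁻¹ * (FreeGroup.of b)⁻¹ :
      FreeGroup V) ∈ raagRels Γ := ⟨a, b, h, rfl⟩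
  have h1 : (QuotientGroup.mk (s := Subgroup.normalClosure (raagRels Γ))
      (FreeGroup.of a * FreeGroup.of b * (FreeGroup.of a)⁻¹ * (FreeGroup.of b)⁻¹) :
      RAAG Γ) = 1 :=
    (QuotientGroup.eq_one_iff _).mpr (Subgroup.subset_normalClosure hr)
  have h2 : raagGen Γ a * raagGen Γ b * (raagGen Γ a)⁻¹ * (raagGen Γ b)⁻¹ = 1 := h1
  rw [← commutatorElement_def] at h2
  exact commutatorElement_eq_one_iff_commute.mp h2

/-- For adjacent vertices `v ≠ w` with `st(v) ⊆ st(w)`, there is a unique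
automorphism `τ_{v,w}` of `A_Γ` with `τ_{v,w}(v) = v·w` and `τ_{v,w}(u) = u`
for every generator `u ≠ v`. -/

theorem stmt_13 [Fintype V] (Γ : SimpleGraph V) (v w : V) (hvw : v ≠ w)
    (hadj : Γ.Adj v w) (hst : gstar Γ v ⊆ gstar Γ w) :
    ∃! τ : MulAut (RAAG Γ), IsElemAut Γ v w τ := by
  classical
  -- key commuting facts
  have key : ∀ b : V, Γ.Adj v b → Commute (raagGen Γ v * raagGen Γ w) (raagGen Γ b) := by
    intro b hb
    have hbw : b ∈ gstar Γ w := hst (Set.mem_insert_iff.mpr (Or.inr hb))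
    rcases Set.mem_insert_iff.mp hbw with hb' | hb'
    · subst hb'
      exact Commute.mul_left (raag_comm hb) (Commute.refl _)
    · exact Commute.mul_left (raag_comm hb) (raag_comm ((Γ.mem_neighborSet _ _).mp hb'))
  set F : V → RAAG Γ := fun u => if u = v then raagGen Γ v * raagGen Γ w else raagGen Γ u
    with hF
  set G : V → RAAG Γ := fun u => if u = v then raagGen Γ v * (raagGen Γ w)⁻¹ else raagGen Γ u
    with hG
  have hFcomm : ∀ a b : V, Γ.Adj a b → Commute (F a) (F b) := by
    intro a b hab
    by_cases ha : a = v <;> by_cases hb : b = v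
    · exact absurd (ha ▸ hb ▸ hab) (Γ.irrefl)
    · simp only [hF, ha, if_pos rfl, if_neg hb]
      exact key b (ha ▸ hab)
    · simp only [hF, hb, if_pos rfl, if_neg ha]
      exact (key a (Γ.adj_symm (hb ▸ hab))).symm
    · simp only [hF, if_neg ha, if_neg hb]
      exact raag_comm hab
  have hGcomm : ∀ a b : V, Γ.Adj a b → Commute (G a) (G b) := by
    intro a b hab
    by_cases ha : a = v <;> by_cases hb : b = v
    · exact absurd (ha ▸ hb ▸ hab) (Γ.irrefl)
    · simp only [hG, ha, if_pos rfl, if_neg hb]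
      have h := key b (ha ▸ hab)
      have hwb : Commute (raagGen Γ w) (raagGen Γ b) := by
        have hbw : b ∈ gstar Γ w := hst (Set.mem_insert_iff.mpr (Or.inr (ha ▸ hab)))
        rcases Set.mem_insert_iff.mp hbw with hb' | hb'
        · exact hb' ▸ Commute.refl _
        · exact raag_comm ((Γ.mem_neighborSet _ _).mp hb')
      exact Commute.mul_left (raag_comm (ha ▸ hab)) hwb.inv_left
    · simp only [hG, hb, if_pos rfl, if_neg ha]
      have hwa : Commute (raagGen Γ w) (raagGen Γ a) := by
        have haw : a ∈ gstar Γ w := hst (Set.mem_insert_iff.mpr (Or.inr (Γ.adj_symm (hb ▸ hab))))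
        rcases Set.mem_insert_iff.mp haw with ha' | ha'
        · exact ha' ▸ Commute.refl _
        · exact raag_comm ((Γ.mem_neighborSet _ _).mp ha')
      exact (Commute.mul_left (raag_comm (Γ.adj_symm (hb ▸ hab))) hwa.inv_left).symm
    · simp only [hG, if_neg ha, if_neg hb]
      exact raag_comm hab
  have relF : ∀ r ∈ raagRels Γ, FreeGroup.lift F r = 1 := by
    rintro r ⟨a, b, hab, rfl⟩
    simp only [map_mul, map_inv, FreeGroup.lift_apply_of]
    rw [← commutatorElement_def]
    exact commutatorElement_eq_one_iff_commute.mpr (hFcomm a b hab)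
  have relG : ∀ r ∈ raagRels Γ, FreeGroup.lift G r = 1 := by
    rintro r ⟨a, b, hab, rfl⟩
    simp only [map_mul, map_inv, FreeGroup.lift_apply_of]
    rw [← commutatorElement_def]
    exact commutatorElement_eq_one_iff_commute.mpr (hGcomm a b hab)
  set φ : RAAG Γ →* RAAG Γ := PresentedGroup.toGroup relF with hφ
  set ψ : RAAG Γ →* RAAG Γ := PresentedGroup.toGroup relG with hψ
  have hφof : ∀ u : V, φ (raagGen Γ u) = F u := fun u => PresentedGroup.toGroup.of relF
  have hψof : ∀ u : V, ψ (raagGen Γ u) = G u := fun u => PresentedGroup.toGroup.of relG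
  have hφw : φ (raagGen Γ w) = raagGen Γ w := by
    rw [hφof w]; simp [hF, hvw.symm]
  have hψw : ψ (raagGen Γ w) = raagGen Γ w := by
    rw [hψof w]; simp [hG, hvw.symm]
  have hφψ : φ.comp ψ = MonoidHom.id _ := by
    apply PresentedGroup.ext
    intro x
    show φ (ψ (raagGen Γ x)) = raagGen Γ x
    by_cases hx : x = v
    · rw [hx, hψof v]
      simp only [hG, if_pos rfl, map_mul, map_inv, hφof v, hφw, hF, if_pos rfl]
      group
    · rw [hψof x]
      simp only [hG, if_neg hx, hφof x, hF, if_neg hx]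
  have hψφ : ψ.comp φ = MonoidHom.id _ := by
    apply PresentedGroup.ext
    intro x
    show ψ (φ (raagGen Γ x)) = raagGen Γ x
    by_cases hx : x = v
    · rw [hx, hφof v]
      simp only [hF, if_pos rfl, map_mul, hψof v, hψw, hG, if_pos rfl]
      group
    · rw [hφof x]
      simp only [hF, if_neg hx, hψof x, hG, if_neg hx]
  refine ⟨MonoidHom.toMulEquiv φ ψ hψφ hφψ, ⟨?_, ?_⟩, ?_⟩
  · show φ (raagGen Γ v) = _
    rw [hφof v]; simp [hF]
  · intro u hu
    show φ (raagGen Γ u) = _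
    rw [hφof u]; simp [hF, hu]
  · intro τ ⟨h1, h2⟩
    ext x
    have : (τ : RAAG Γ →* RAAG Γ) = φ := by
      apply PresentedGroup.ext
      intro u
      by_cases hu : u = v
      · show τ (raagGen Γ u) = φ (raagGen Γ u)
        rw [hu, h1, hφof v]; simp [hF]
      · show τ (raagGen Γ u) = φ (raagGen Γ u)
        rw [h2 u hu, hφof u]; simp [hF, hu]
    exact DFunLike.congr_fun this x
end

section
/- Let v ≠ w be adjacent vertices of a finite simple graph Γ with st(v) ⊆ st(w), let C be a connected component of the subgraph of Γ induced on V ∖ st(v), and set C′ = C ∖ st(w). Then C′ is a union of connected components of the subgraph of Γ induced on V ∖ st(w), the maps τ_{v,w}, γ_{v,C} and γ_{w,C′} are well-defined automorphisms of A_Γ, and in Aut(A_Γ) one has τ_{v,w} ∘ γ_{v,C} = γ_{v,C} ∘ γ_{w,C′} ∘ τ_{v,w}. -/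
/-
Each of the three maps is given on generators; it defines an endomorphism of `A_Γ` because the
images of adjacent vertices still commute (this is where `lk(v) ⊆ st(w)` and the component
condition on `C` enter), and the same construction with the opposite exponent is its inverse.
Since `C` lies outside `st(v) ⊆ st(w)`, a path avoiding `st(w)` also avoids `st(v)`, so `C ∖ st(w)`
is a union of components of `V ∖ st(w)`. The relation is then checked generator by generator:
on `x ∈ C ∩ st(w)` both sides conjugate by `v`, because `w` commutes with `x`; on `x ∈ C ∖ st(w)`
both sides conjugate by `vw = wv`; every other generator is treated identically by both sides.
-/

variable {V : Type*}

/-- `γ` is the partial conjugation `γ_{u,C}`: the automorphism of `A_Γ` sending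
each generator `x ∈ C` to `u·x·u⁻¹` and fixing every other generator. -/
def IsPartialConj (Γ : SimpleGraph V) (u : V) (C : Set V)
    (γ : MulAut (RAAG Γ)) : Prop :=
  (∀ x ∈ C, γ (raagGen Γ x) = raagGen Γ u * raagGen Γ x * (raagGen Γ u)⁻¹) ∧
    ∀ x ∉ C, γ (raagGen Γ x) = raagGen Γ x

/-- `C` is a connected component of the subgraph of `Γ` induced on
`V ∖ st(u)`. -/
def IsComponent (Γ : SimpleGraph V) (u : V) (C : Set V) : Prop :=
  C ⊆ {x : V | x ∉ gstar Γ u} ∧ C.Nonempty ∧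
    ∀ a b : ({x : V | x ∉ gstar Γ u} : Set V), (a : V) ∈ C →
      ((Γ.induce {x : V | x ∉ gstar Γ u}).Reachable a b ↔ (b : V) ∈ C)

/-- `C` is a union of connected components of the subgraph of `Γ` induced on
`V ∖ st(u)`. -/
def IsUnionOfComponents (Γ : SimpleGraph V) (u : V) (C : Set V) : Prop :=
  C ⊆ {x : V | x ∉ gstar Γ u} ∧
    ∀ a b : ({x : V | x ∉ gstar Γ u} : Set V),
      (Γ.induce {x : V | x ∉ gstar Γ u}).Reachable a b →
        ((a : V) ∈ C ↔ (b : V) ∈ C)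

section Graph

variable {Γ : SimpleGraph V} {u v w : V} {C : Set V}

theorem mem_gstar_self (Γ : SimpleGraph V) (v : V) : v ∈ gstar Γ v :=
  Set.mem_insert v _

theorem mem_gstar_of_adj (h : Γ.Adj v w) : w ∈ gstar Γ v :=
  Set.mem_insert_of_mem v h

theorem IsComponent.isUnionOfComponents (hC : IsComponent Γ u C) :
    IsUnionOfComponents Γ u C :=
  ⟨hC.1, fun a b hab => ⟨fun ha => (hC.2.2 a b ha).1 hab, fun hb => (hC.2.2 b a hb).1 hab.symm⟩⟩

theorem IsUnionOfComponents.mem_gstar_of_adj (hC : IsUnionOfComponents Γ u C) {a b : V}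
    (ha : a ∈ C) (hb : b ∉ C) (hab : Γ.Adj a b) : b ∈ gstar Γ u := by
  by_contra hbu
  have hreach : (Γ.induce {x | x ∉ gstar Γ u}).Reachable ⟨a, hC.1 ha⟩ ⟨b, hbu⟩ :=
    SimpleGraph.Adj.reachable hab
  exact hb ((hC.2 _ _ hreach).1 ha)

theorem IsUnionOfComponents.diff_gstar (hst : gstar Γ v ⊆ gstar Γ w)
    (hC : IsUnionOfComponents Γ v C) : IsUnionOfComponents Γ w (C \ gstar Γ w) := by
  refine ⟨fun x hx => hx.2, fun a b hab => ?_⟩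
  have hsub : {x | x ∉ gstar Γ w} ⊆ {x | x ∉ gstar Γ v} := fun x hx hv => hx (hst hv)
  have hiff := hC.2 _ _ (hab.map (Γ.induceHomOfLE hsub).toHom)
  simp only [Set.mem_sdiff] at hiff ⊢
  exact ⟨fun h => ⟨hiff.1 h.1, b.2⟩, fun h => ⟨hiff.2 h.1, a.2⟩⟩

end Graph

namespace RAAG

variable {Γ : SimpleGraph V}

theorem commute_raagGen_of_adj {a b : V} (h : Γ.Adj a b) :
    Commute (raagGen Γ a) (raagGen Γ b) := by
  have hrel : raagGen Γ a * raagGen Γ b * (raagGen Γ a)⁻¹ * (raagGen Γ b)⁻¹ = 1 :=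
    PresentedGroup.one_of_mem ⟨a, b, h, rfl⟩
  exact mul_inv_eq_iff_eq_mul.1 (mul_inv_eq_one.1 hrel)

theorem commute_raagGen_of_mem_gstar {a b : V} (h : b ∈ gstar Γ a) :
    Commute (raagGen Γ a) (raagGen Γ b) := by
  rcases h with rfl | h
  · exact Commute.refl _
  · exact commute_raagGen_of_adj h

section Lift

variable {G : Type*} [Group G]

theorem lift_raagRels_eq_one {f : V → G} (hf : ∀ a b, Γ.Adj a b → Commute (f a) (f b)) :
    ∀ r ∈ raagRels Γ, FreeGroup.lift f r = 1 := by
  rintro r ⟨a, b, hab, rfl⟩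
  simp only [map_mul, map_inv, FreeGroup.lift_apply_of, (hf a b hab).eq]
  group

def lift (f : V → G) (hf : ∀ a b, Γ.Adj a b → Commute (f a) (f b)) : RAAG Γ →* G :=
  PresentedGroup.toGroup (lift_raagRels_eq_one hf)

@[simp]
theorem lift_raagGen (f : V → G) (hf : ∀ a b, Γ.Adj a b → Commute (f a) (f b)) (x : V) :
    lift f hf (raagGen Γ x) = f x :=
  PresentedGroup.toGroup.of _

theorem hom_ext {φ ψ : RAAG Γ →* G} (h : ∀ x, φ (raagGen Γ x) = ψ (raagGen Γ x)) : φ = ψ :=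
  PresentedGroup.ext h

end Lift

theorem mulAut_ext {φ ψ : MulAut (RAAG Γ)} (h : ∀ x, φ (raagGen Γ x) = ψ (raagGen Γ x)) :
    φ = ψ :=
  MulEquiv.toMonoidHom_injective (hom_ext h)

def autOfGen (f f' : V → RAAG Γ) (hf : ∀ a b, Γ.Adj a b → Commute (f a) (f b))
    (hf' : ∀ a b, Γ.Adj a b → Commute (f' a) (f' b))
    (h : ∀ x, lift f' hf' (f x) = raagGen Γ x) (h' : ∀ x, lift f hf (f' x) = raagGen Γ x) :
    MulAut (RAAG Γ) :=
  MonoidHom.toMulEquiv (lift f hf) (lift f' hf') (hom_ext fun x => by simpa using h x)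
    (hom_ext fun x => by simpa using h' x)

@[simp]
theorem autOfGen_raagGen (f f' : V → RAAG Γ) hf hf' h h' (x : V) :
    autOfGen f f' hf hf' h h' (raagGen Γ x) = f x :=
  lift_raagGen f hf x

section Twist

variable {v w : V}

open Classical in
/-- The images of the generators under `τ_{v,w}^n`. -/
noncomputable def twistGen (Γ : SimpleGraph V) (v w : V) (n : ℤ) (x : V) : RAAG Γ :=
  if x = v then raagGen Γ v * raagGen Γ w ^ n else raagGen Γ x

@[simp]
theorem twistGen_self (n : ℤ) : twistGen Γ v w n v = raagGen Γ v * raagGen Γ w ^ n :=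
  if_pos rfl

@[simp]
theorem twistGen_of_ne {n : ℤ} {x : V} (hx : x ≠ v) : twistGen Γ v w n x = raagGen Γ x :=
  if_neg hx

theorem commute_twistGen (hlk : Γ.neighborSet v ⊆ gstar Γ w) (n : ℤ) (a b : V)
    (hab : Γ.Adj a b) : Commute (twistGen Γ v w n a) (twistGen Γ v w n b) := by
  have key : ∀ b, Γ.Adj v b → Commute (raagGen Γ v * raagGen Γ w ^ n) (raagGen Γ b) :=
    fun b hb => (commute_raagGen_of_adj hb).mul_left
      ((commute_raagGen_of_mem_gstar (hlk hb)).zpow_left n)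
  by_cases ha : a = v <;> by_cases hb : b = v
  · exact absurd (ha.trans hb.symm) hab.ne
  · subst ha
    simpa [hb] using key b hab
  · subst hb
    simpa [ha] using (key a hab.symm).symm
  · simpa [ha, hb] using commute_raagGen_of_adj hab

theorem lift_twistGen_twistGen (hvw : v ≠ w) (hlk : Γ.neighborSet v ⊆ gstar Γ w) {n m : ℤ}
    (hnm : n + m = 0) (x : V) :
    lift (twistGen Γ v w n) (commute_twistGen hlk n) (twistGen Γ v w m x) = raagGen Γ x := by
  by_cases hx : x = v
  · subst hx
    simp only [twistGen_self, map_mul, map_zpow, lift_raagGen, twistGen_of_ne hvw.symm]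
    rw [mul_assoc, ← zpow_add, hnm, zpow_zero, mul_one]
  · simp only [twistGen_of_ne hx, lift_raagGen]

theorem exists_isElemAut (hvw : v ≠ w) (hlk : Γ.neighborSet v ⊆ gstar Γ w) :
    ∃ τ : MulAut (RAAG Γ), IsElemAut Γ v w τ :=
  ⟨autOfGen (twistGen Γ v w 1) (twistGen Γ v w (-1)) _ _
      (lift_twistGen_twistGen hvw hlk (by norm_num)) (lift_twistGen_twistGen hvw hlk (by norm_num)),
    by simp, fun u hu => by simp [hu]⟩

end Twist

section PartialConj

variable {u : V} {C : Set V}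

open Classical in
/-- The images of the generators under `γ_{u,C}^n`. -/
noncomputable def conjGen (Γ : SimpleGraph V) (u : V) (C : Set V) (n : ℤ) (x : V) : RAAG Γ :=
  if x ∈ C then raagGen Γ u ^ n * raagGen Γ x * (raagGen Γ u ^ n)⁻¹ else raagGen Γ x

@[simp]
theorem conjGen_of_mem {n : ℤ} {x : V} (hx : x ∈ C) :
    conjGen Γ u C n x = raagGen Γ u ^ n * raagGen Γ x * (raagGen Γ u ^ n)⁻¹ :=
  if_pos hx

@[simp]
theorem conjGen_of_notMem {n : ℤ} {x : V} (hx : x ∉ C) : conjGen Γ u C n x = raagGen Γ x :=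
  if_neg hx

theorem commute_conjGen (hC : ∀ a ∈ C, ∀ b ∉ C, Γ.Adj a b → b ∈ gstar Γ u) (n : ℤ) (a b : V)
    (hab : Γ.Adj a b) : Commute (conjGen Γ u C n a) (conjGen Γ u C n b) := by
  have key : ∀ a ∈ C, ∀ b ∉ C, Γ.Adj a b →
      Commute (raagGen Γ u ^ n * raagGen Γ a * (raagGen Γ u ^ n)⁻¹) (raagGen Γ b) :=
    fun a ha b hb hab =>
      have hu := (commute_raagGen_of_mem_gstar (hC a ha b hb hab)).zpow_left n
      (hu.mul_left (commute_raagGen_of_adj hab)).mul_left hu.inv_left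
  by_cases ha : a ∈ C <;> by_cases hb : b ∈ C
  · simpa [ha, hb] using commute_raagGen_of_adj hab
  · simpa [ha, hb] using key a ha b hb hab
  · simpa [ha, hb] using (key b hb a ha hab.symm).symm
  · simpa [ha, hb] using commute_raagGen_of_adj hab

theorem lift_conjGen_conjGen (hu : u ∉ C) (hC : ∀ a ∈ C, ∀ b ∉ C, Γ.Adj a b → b ∈ gstar Γ u)
    {n m : ℤ} (hnm : n + m = 0) (x : V) :
    lift (conjGen Γ u C n) (commute_conjGen hC n) (conjGen Γ u C m x) = raagGen Γ x := by
  obtain rfl : m = -n := by omega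
  by_cases hx : x ∈ C
  · simp only [conjGen_of_mem hx, map_mul, map_inv, map_zpow, lift_raagGen, conjGen_of_notMem hu]
    group
  · simp only [conjGen_of_notMem hx, lift_raagGen]

theorem exists_isPartialConj (hu : u ∉ C) (hC : ∀ a ∈ C, ∀ b ∉ C, Γ.Adj a b → b ∈ gstar Γ u) :
    ∃ γ : MulAut (RAAG Γ), IsPartialConj Γ u C γ :=
  ⟨autOfGen (conjGen Γ u C 1) (conjGen Γ u C (-1)) _ _
      (lift_conjGen_conjGen hu hC (by norm_num)) (lift_conjGen_conjGen hu hC (by norm_num)),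
    fun x hx => by simp [hx], fun x hx => by simp [hx]⟩

end PartialConj

theorem twist_mul_partialConj {v w : V} {C : Set V} {τ γ γ' : MulAut (RAAG Γ)}
    (hadj : Γ.Adj v w) (hvC : v ∉ C) (hwC : w ∉ C) (hτ : IsElemAut Γ v w τ)
    (hγ : IsPartialConj Γ v C γ) (hγ' : IsPartialConj Γ w (C \ gstar Γ w) γ') :
    τ * γ = γ * γ' * τ := by
  have hvw : raagGen Γ v * raagGen Γ w = raagGen Γ w * raagGen Γ v :=
    (commute_raagGen_of_adj hadj).eq
  have hvC' : v ∉ C \ gstar Γ w := fun h => h.2 (mem_gstar_of_adj hadj.symm)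
  have hwC' : w ∉ C \ gstar Γ w := fun h => h.2 (mem_gstar_self Γ w)
  refine mulAut_ext fun x => ?_
  simp only [MulAut.mul_apply]
  by_cases hxC : x ∈ C
  · have hxv : x ≠ v := ne_of_mem_of_not_mem hxC hvC
    rw [hγ.1 x hxC, map_mul, map_mul, map_inv, hτ.1, hτ.2 x hxv]
    by_cases hxw : x ∈ gstar Γ w
    · rw [hγ'.2 x fun h => h.2 hxw, hγ.1 x hxC]
      have hwx : raagGen Γ w * raagGen Γ x = raagGen Γ x * raagGen Γ w :=
        (commute_raagGen_of_mem_gstar hxw).eq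
      calc raagGen Γ v * raagGen Γ w * raagGen Γ x * (raagGen Γ v * raagGen Γ w)⁻¹
          = raagGen Γ v * (raagGen Γ w * raagGen Γ x) * (raagGen Γ w)⁻¹ * (raagGen Γ v)⁻¹ := by
            group
        _ = raagGen Γ v * raagGen Γ x * (raagGen Γ v)⁻¹ := by rw [hwx]; group
    · rw [hγ'.1 x ⟨hxC, hxw⟩, map_mul, map_mul, map_inv, hγ.2 w hwC, hγ.1 x hxC, hvw]
      group
  · by_cases hxv : x = v
    · subst hxv
      rw [hγ.2 x hxC, hτ.1, map_mul, hγ'.2 x hvC', hγ'.2 w hwC', map_mul, hγ.2 x hxC, hγ.2 w hwC]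
    · rw [hγ.2 x hxC, hτ.2 x hxv, hγ'.2 x fun h => hxC h.1, hγ.2 x hxC]

end RAAG

theorem stmt_14_general (Γ : SimpleGraph V) (v w : V) (hvw : v ≠ w)
    (hadj : Γ.Adj v w) (hst : gstar Γ v ⊆ gstar Γ w)
    (C : Set V) (hC : IsComponent Γ v C) :
    IsUnionOfComponents Γ w (C \ gstar Γ w) ∧
    (∃ τ : MulAut (RAAG Γ), IsElemAut Γ v w τ) ∧
    (∃ γ : MulAut (RAAG Γ), IsPartialConj Γ v C γ) ∧
    (∃ γ' : MulAut (RAAG Γ), IsPartialConj Γ w (C \ gstar Γ w) γ') ∧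
    (∀ τ γ γ' : MulAut (RAAG Γ), IsElemAut Γ v w τ → IsPartialConj Γ v C γ →
      IsPartialConj Γ w (C \ gstar Γ w) γ' → τ * γ = γ * γ' * τ) := by
  have hU : IsUnionOfComponents Γ v C := hC.isUnionOfComponents
  have hU' : IsUnionOfComponents Γ w (C \ gstar Γ w) := hU.diff_gstar hst
  have hvC : v ∉ C := fun h => hC.1 h (mem_gstar_self Γ v)
  have hwC : w ∉ C := fun h => hC.1 h (mem_gstar_of_adj hadj)
  refine ⟨hU', RAAG.exists_isElemAut hvw fun b hb => hst (mem_gstar_of_adj hb),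
    RAAG.exists_isPartialConj hvC fun a ha b hb => hU.mem_gstar_of_adj ha hb,
    RAAG.exists_isPartialConj (fun h => h.2 (mem_gstar_self Γ w))
      fun a ha b hb => hU'.mem_gstar_of_adj ha hb,
    fun τ γ γ' => RAAG.twist_mul_partialConj hadj hvC hwC⟩

/-- Let `v ≠ w` be adjacent with `st(v) ⊆ st(w)`, and let `C` be a connected
component of the subgraph induced on `V ∖ st(v)`.  Then `C' = C ∖ st(w)` is a
union of connected components of the subgraph induced on `V ∖ st(w)`, the maps
`τ_{v,w}`, `γ_{v,C}` and `γ_{w,C'}` are well-defined automorphisms of `A_Γ`,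
and `τ_{v,w} ∘ γ_{v,C} = γ_{v,C} ∘ γ_{w,C'} ∘ τ_{v,w}` in `Aut(A_Γ)`. -/
theorem stmt_14 [Fintype V] (Γ : SimpleGraph V) (v w : V) (hvw : v ≠ w)
    (hadj : Γ.Adj v w) (hst : gstar Γ v ⊆ gstar Γ w)
    (C : Set V) (hC : IsComponent Γ v C) :
    IsUnionOfComponents Γ w (C \ gstar Γ w) ∧
    (∃ τ : MulAut (RAAG Γ), IsElemAut Γ v w τ) ∧
    (∃ γ : MulAut (RAAG Γ), IsPartialConj Γ v C γ) ∧
    (∃ γ' : MulAut (RAAG Γ), IsPartialConj Γ w (C \ gstar Γ w) γ') ∧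
    (∀ τ γ γ' : MulAut (RAAG Γ), IsElemAut Γ v w τ → IsPartialConj Γ v C γ →
      IsPartialConj Γ w (C \ gstar Γ w) γ' → τ * γ = γ * γ' * τ) :=
  stmt_14_general Γ v w hvw hadj hst C hC
end

section
/- Let x, v, w be distinct vertices of a finite simple graph Γ with x adjacent to v, v adjacent to w, st(x) ⊆ st(v), and st(v) ⊆ st(w). Then x is adjacent to w and st(x) ⊆ st(w), so the elementary twists τ_{x,v}, τ_{x,w}, τ_{v,w} are all defined, and in Aut(A_Γ) one has τ_{v,w} ∘ τ_{x,v} = τ_{x,v} ∘ τ_{x,w} ∘ τ_{v,w}. -/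
variable {V : Type*}

/-- Let `x, v, w` be distinct vertices with `x` adjacent to `v`, `v` adjacent
to `w`, `st(x) ⊆ st(v)` and `st(v) ⊆ st(w)`.  Then `x` is adjacent to `w` and
`st(x) ⊆ st(w)`, so the elementary twists `τ_{x,v}`, `τ_{x,w}`, `τ_{v,w}` are
all defined, and `τ_{v,w} ∘ τ_{x,v} = τ_{x,v} ∘ τ_{x,w} ∘ τ_{v,w}`. -/
theorem stmt_16 [Fintype V] (Γ : SimpleGraph V) (x v w : V)
    (hxv : x ≠ v) (hxw : x ≠ w) (hvw : v ≠ w)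
    (haxv : Γ.Adj x v) (havw : Γ.Adj v w)
    (hstxv : gstar Γ x ⊆ gstar Γ v) (hstvw : gstar Γ v ⊆ gstar Γ w) :
    Γ.Adj x w ∧ gstar Γ x ⊆ gstar Γ w ∧
    (∀ τxv τxw τvw : MulAut (RAAG Γ),
      IsElemAut Γ x v τxv → IsElemAut Γ x w τxw → IsElemAut Γ v w τvw →
      τvw * τxv = τxv * τxw * τvw) := by
  have hxmem : x ∈ gstar Γ w := hstvw (hstxv (Set.mem_insert x _))
  have haxw : Γ.Adj x w := by
    rcases hxmem with h | h
    · exact absurd h hxw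
    · exact (Γ.adj_symm h)
  refine ⟨haxw, fun u hu => hstvw (hstxv hu), ?_⟩
  intro τxv τxw τvw ⟨hxv1, hxv2⟩ ⟨hxw1, hxw2⟩ ⟨hvw1, hvw2⟩
  apply MulEquiv.toMonoidHom_injective
  apply PresentedGroup.ext
  intro u
  show (τvw * τxv) (raagGen Γ u) = (τxv * τxw * τvw) (raagGen Γ u)
  simp only [MulAut.mul_apply]
  by_cases hux : u = x
  · subst hux
    rw [hxv1, map_mul, hvw2 u hxv, hvw1, hxw1, map_mul, hxv1, hxv2 w hxw.symm]
    group
  · by_cases huv : u = v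
    · subst huv
      rw [hxv2 u hxv.symm, hvw1, map_mul, hxw2 u hxv.symm, hxw2 w hxw.symm,
        map_mul, hxv2 u hxv.symm, hxv2 w hxw.symm]
    · rw [hxv2 u hux, hvw2 u huv, hxw2 u hux, hxv2 u hux]
end
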